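/- arXiv:1501.05253 — 9 statements merged into one kernel-verified Lean document; each statement's English description precedes it below -/
import Mathlib

section
/- Let D=(x₀,x₁)×(t₀,t₁)⊂ℝ² be a space–time rectangle, c>0, j∈ℕ, and let u₀ be j-times continuously differentiable on the closure of Ω_D⁻=(x₀−ct₁, x₁−ct₀). Define u(x,t):=u₀(x−ct) for (x,t)∈D. Then |u|²_{H^j_c(D)} ≤ (j+1) · min{ t₁−t₀ , (x₁−x₀)/c } · |u₀|²_{H^j(Ω_D⁻)}. The analogous bound holds for w(x,t)=w₀(x+ct) with Ω_D⁺=(x₀+ct₀, x₁+ct₁) in place of Ω_D⁻. -/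
open MeasureTheory Set

/-- Partial derivative in the space variable. -/
noncomputable def pdX (v : ℝ → ℝ → ℝ) : ℝ → ℝ → ℝ := fun x t => deriv (fun y => v y t) x

/-- Partial derivative in the time variable. -/
noncomputable def pdT (v : ℝ → ℝ → ℝ) : ℝ → ℝ → ℝ := fun x t => deriv (fun s => v x s) t

/-- Anisotropic derivative `D_c^α v = c^{-α_t} ∂_x^{α_x} ∂_t^{α_t} v`. -/
noncomputable def Dc (c : ℝ) (ax at' : ℕ) (v : ℝ → ℝ → ℝ) : ℝ → ℝ → ℝ :=
  fun x t => (c ^ at')⁻¹ * (pdX^[ax] (pdT^[at'] v)) x t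

/-- The seminorm `|v|_{W^{j,∞}_c(D)}` on the rectangle `D = (x₀,x₁)×(t₀,t₁)`:
the sup over multi-indices `α` with `|α| = j` of the sup norm of `D_c^α v` on `D`. -/
noncomputable def WinfC (c : ℝ) (j : ℕ) (v : ℝ → ℝ → ℝ) (x₀ x₁ t₀ t₁ : ℝ) : ℝ :=
  sSup {r : ℝ | ∃ ax at' : ℕ, ax + at' = j ∧
    ∃ x ∈ Set.Ioo x₀ x₁, ∃ t ∈ Set.Ioo t₀ t₁, r = |Dc c ax at' v x t|}

/-- The seminorm `|u|_{W^{j,∞}(a,b)}`: the sup norm of the `j`-th derivative on `(a,b)`. -/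
noncomputable def Winf1 (j : ℕ) (u : ℝ → ℝ) (a b : ℝ) : ℝ :=
  sSup {r : ℝ | ∃ z ∈ Set.Ioo a b, r = |iteratedDeriv j u z|}
/-- The squared seminorm `|v|²_{H^j_c(D)} = Σ_{|α|=j} ‖D_c^α v‖²_{L²(D)}`
on the rectangle `D = (x₀,x₁)×(t₀,t₁)`. -/
noncomputable def HjCsq (c : ℝ) (j : ℕ) (v : ℝ → ℝ → ℝ) (x₀ x₁ t₀ t₁ : ℝ) : ℝ :=
  ∑ k ∈ Finset.range (j + 1), ∫ x in x₀..x₁, ∫ t in t₀..t₁, (Dc c (j - k) k v x t) ^ 2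

/-! For `v(x, t) = φ(x + a t)` every mixed derivative is `∂ₓ^{j-k} ∂ₜ^k v = a^k φ^{(j)}(x + a t)`,
so when `|a| = c` all `j + 1` terms of `|v|²_{H^j_c(D)}` equal `∫∫_D φ^{(j)}(x + a t)²`.
This double integral is bounded in two ways by changing variables to `z = x + a t`: integrating
first in `t` (Jacobian `|a| = c`) gives `(x₁ - x₀) / c · ∫ φ^{(j)}²`, and integrating first in `x`
(after Fubini) gives `(t₁ - t₀) · ∫ φ^{(j)}²`. -/

section
variable (φ : ℝ → ℝ) (a b : ℝ)

theorem pdX_const_mul_comp_add_mul :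
    pdX (fun x t => b * φ (x + a * t)) = fun x t => b * deriv φ (x + a * t) := by
  ext x t
  simp only [pdX, deriv_const_mul_field', deriv_comp_add_const]

theorem pdT_const_mul_comp_add_mul :
    pdT (fun x t => b * φ (x + a * t)) = fun x t => b * a * deriv φ (x + a * t) := by
  ext x t
  simp only [pdT, deriv_const_mul_field', deriv_comp_mul_left (f := fun y => φ (x + y)),
    deriv_comp_const_add, smul_eq_mul, mul_assoc]

theorem iterate_pdT_comp_add_mul (k : ℕ) :
    pdT^[k] (fun x t => φ (x + a * t)) = fun x t => a ^ k * iteratedDeriv k φ (x + a * t) := by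
  induction k with
  | zero => simp
  | succ k ih =>
    rw [Function.iterate_succ_apply', ih, pdT_const_mul_comp_add_mul, iteratedDeriv_succ, pow_succ]

theorem iterate_pdX_const_mul_iteratedDeriv_comp_add_mul (k m : ℕ) :
    pdX^[m] (fun x t => b * iteratedDeriv k φ (x + a * t))
      = fun x t => b * iteratedDeriv (k + m) φ (x + a * t) := by
  induction m with
  | zero => rfl
  | succ m ih =>
    rw [Function.iterate_succ_apply', ih, pdX_const_mul_comp_add_mul, ← iteratedDeriv_succ]
    rfl

theorem Dc_comp_add_mul (c : ℝ) {j k : ℕ} (hk : k ≤ j) :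
    Dc c (j - k) k (fun x t => φ (x + a * t))
      = fun x t => (a / c) ^ k * iteratedDeriv j φ (x + a * t) := by
  ext x t
  rw [Dc, iterate_pdT_comp_add_mul, iterate_pdX_const_mul_iteratedDeriv_comp_add_mul,
    Nat.add_sub_cancel' hk, div_pow]
  ring

theorem HjCsq_comp_add_mul {c : ℝ} (hac : a ^ 2 = c ^ 2) (hc : c ≠ 0) (j : ℕ)
    (x₀ x₁ t₀ t₁ : ℝ) :
    HjCsq c j (fun x t => φ (x + a * t)) x₀ x₁ t₀ t₁
      = (j + 1) * ∫ x in x₀..x₁, ∫ t in t₀..t₁, (iteratedDeriv j φ (x + a * t)) ^ 2 := by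
  have hsq : (a / c) ^ 2 = 1 := by rw [div_pow, hac, div_self (pow_ne_zero 2 hc)]
  have hterm : ∀ k ∈ Finset.range (j + 1),
      (∫ x in x₀..x₁, ∫ t in t₀..t₁, (Dc c (j - k) k (fun x t => φ (x + a * t)) x t) ^ 2)
        = ∫ x in x₀..x₁, ∫ t in t₀..t₁, (iteratedDeriv j φ (x + a * t)) ^ 2 := by
    intro k hk
    have hk2 : ((a / c) ^ k) ^ 2 = 1 := by rw [← pow_mul, mul_comm, pow_mul, hsq, one_pow]
    simp only [Dc_comp_add_mul φ a c (Finset.mem_range_succ_iff.mp hk), mul_pow, hk2, one_mul]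
  rw [HjCsq, Finset.sum_congr rfl hterm, Finset.sum_const, Finset.card_range, nsmul_eq_mul]
  push_cast
  rfl

end

theorem abs_mul_setIntegral_comp_add_mul_le {G : ℝ → ℝ} {T Ω : Set ℝ} {a b : ℝ} (ha : a ≠ 0)
    (hT : MeasurableSet T) (hΩ : MeasurableSet Ω) (hG_int : IntegrableOn G Ω)
    (hG_nonneg : ∀ z ∈ Ω, 0 ≤ G z) (hmaps : MapsTo (fun t => b + a * t) T Ω) :
    |a| * ∫ t in T, G (b + a * t) ≤ ∫ z in Ω, G z := by
  have hderiv : ∀ t ∈ T, HasDerivWithinAt (fun t => b + a * t) a T t := fun t _ => by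
    simpa using (((hasDerivAt_id t).const_mul a).const_add b).hasDerivWithinAt
  have hinj : InjOn (fun t => b + a * t) T := fun s _ t _ h => by simpa [ha] using h
  calc |a| * ∫ t in T, G (b + a * t)
      = ∫ z in (fun t => b + a * t) '' T, G z := by
        rw [integral_image_eq_integral_abs_deriv_smul hT hderiv hinj, integral_smul, smul_eq_mul]
    _ ≤ ∫ z in Ω, G z :=
        setIntegral_mono_set hG_int (ae_restrict_of_forall_mem hΩ hG_nonneg)
          hmaps.image_subset.eventuallyLE

theorem setIntegral_le_mul_measureReal {α : Type*} [MeasurableSpace α] {μ : Measure α}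
    {f : α → ℝ} {s : Set α} {K : ℝ} (hs : μ s < ⊤) (hf : ∀ x ∈ s, 0 ≤ f x ∧ f x ≤ K) :
    ∫ x in s, f x ∂μ ≤ K * μ.real s :=
  (le_abs_self _).trans <| norm_setIntegral_le_of_norm_le_const hs fun x hx => by
    rw [Real.norm_eq_abs, abs_of_nonneg (hf x hx).1]
    exact (hf x hx).2

theorem integral_integral_comp_add_mul_le {G : ℝ → ℝ} {Ω : Set ℝ} {a C x₀ x₁ t₀ t₁ : ℝ}
    (ha : a ≠ 0) (hx : x₀ ≤ x₁) (ht : t₀ ≤ t₁) (hΩ : MeasurableSet Ω)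
    (hG_int : IntegrableOn G Ω) (hG_cont : ContinuousOn G Ω) (hG_nonneg : ∀ z ∈ Ω, 0 ≤ G z)
    (hG_le : ∀ z ∈ Ω, G z ≤ C) (hmaps : ∀ x ∈ Ioo x₀ x₁, ∀ t ∈ Ioo t₀ t₁, x + a * t ∈ Ω) :
    ∫ x in x₀..x₁, ∫ t in t₀..t₁, G (x + a * t)
      ≤ min (t₁ - t₀) ((x₁ - x₀) / |a|) * ∫ z in Ω, G z := by
  set I := ∫ z in Ω, G z
  have hI : 0 ≤ I := setIntegral_nonneg hΩ hG_nonneg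
  simp only [intervalIntegral.integral_of_le hx, intervalIntegral.integral_of_le ht,
    integral_Ioc_eq_integral_Ioo]
  have hinner_t : ∀ x ∈ Ioo x₀ x₁,
      0 ≤ ∫ t in Ioo t₀ t₁, G (x + a * t) ∧ ∫ t in Ioo t₀ t₁, G (x + a * t) ≤ |a|⁻¹ * I :=
    fun x hx => ⟨setIntegral_nonneg measurableSet_Ioo fun t ht => hG_nonneg _ (hmaps x hx t ht),
      (le_inv_mul_iff₀ (abs_pos.mpr ha)).mpr <| abs_mul_setIntegral_comp_add_mul_le ha
        measurableSet_Ioo hΩ hG_int hG_nonneg fun t ht => hmaps x hx t ht⟩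
  have hinner_x : ∀ t ∈ Ioo t₀ t₁,
      0 ≤ ∫ x in Ioo x₀ x₁, G (x + a * t) ∧ ∫ x in Ioo x₀ x₁, G (x + a * t) ≤ I := by
    intro t ht
    refine ⟨setIntegral_nonneg measurableSet_Ioo fun x hx => hG_nonneg _ (hmaps x hx t ht), ?_⟩
    simpa [add_comm] using abs_mul_setIntegral_comp_add_mul_le (a := 1) (b := a * t) one_ne_zero
      measurableSet_Ioo hΩ hG_int hG_nonneg fun x hx => by simpa [add_comm] using hmaps x hx t ht
  have hint : Integrable (Function.uncurry fun x t => G (x + a * t))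
      ((volume.restrict (Ioo x₀ x₁)).prod (volume.restrict (Ioo t₀ t₁))) := by
    have hmaps' : MapsTo (fun p : ℝ × ℝ => p.1 + a * p.2) (Ioo x₀ x₁ ×ˢ Ioo t₀ t₁) Ω :=
      fun p hp => hmaps p.1 hp.1 p.2 hp.2
    rw [Measure.prod_restrict]
    refine IntegrableOn.of_bound ?_ ((hG_cont.comp (by fun_prop) hmaps').aestronglyMeasurable
      (measurableSet_Ioo.prod measurableSet_Ioo)) C ?_
    · rw [Measure.prod_prod, Real.volume_Ioo, Real.volume_Ioo]
      exact ENNReal.mul_lt_top ENNReal.ofReal_lt_top ENNReal.ofReal_lt_top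
    · refine ae_restrict_of_forall_mem (measurableSet_Ioo.prod measurableSet_Ioo) fun p hp => ?_
      show |G (p.1 + a * p.2)| ≤ C
      exact (abs_of_nonneg (hG_nonneg _ (hmaps' hp))).trans_le (hG_le _ (hmaps' hp))
  have hbound_t := setIntegral_le_mul_measureReal (μ := volume) measure_Ioo_lt_top hinner_t
  have hbound_x := setIntegral_le_mul_measureReal (μ := volume) measure_Ioo_lt_top hinner_x
  rw [← integral_integral_swap hint] at hbound_x
  rw [Real.volume_real_Ioo_of_le hx] at hbound_t
  rw [Real.volume_real_Ioo_of_le ht] at hbound_x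
  rw [min_mul_of_nonneg _ _ hI]
  exact le_min (hbound_x.trans_eq (by ring)) (hbound_t.trans_eq (by ring))

section
variable {f : ℝ → ℝ} {n : ℕ} {p q : ℝ}

theorem ContDiffOn.continuousOn_iteratedDeriv_Ioo (hf : ContDiffOn ℝ n f (Icc p q)) :
    ContinuousOn (iteratedDeriv n f) (Ioo p q) :=
  ((hf.mono Ioo_subset_Icc_self).continuousOn_iteratedDerivWithin le_rfl
    isOpen_Ioo.uniqueDiffOn).congr (iteratedDerivWithin_of_isOpen isOpen_Ioo).symm

theorem ContDiffOn.exists_bound_iteratedDeriv_Ioo (hf : ContDiffOn ℝ n f (Icc p q))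
    (hpq : p < q) : ∃ M, ∀ z ∈ Ioo p q, |iteratedDeriv n f z| ≤ M := by
  obtain ⟨M, hM⟩ := isCompact_Icc.exists_bound_of_continuousOn
    (hf.continuousOn_iteratedDerivWithin le_rfl (uniqueDiffOn_Icc hpq))
  refine ⟨M, fun z hz => ?_⟩
  rw [← iteratedDerivWithin_eq_iteratedDeriv (uniqueDiffOn_Icc hpq)
    (hf.contDiffAt (Icc_mem_nhds hz.1 hz.2)) (Ioo_subset_Icc_self hz)]
  exact hM z (Ioo_subset_Icc_self hz)

end

theorem HjCsq_comp_add_mul_le {φ : ℝ → ℝ} {a c p q x₀ x₁ t₀ t₁ : ℝ} {j : ℕ} (hc : 0 < c)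
    (hac : |a| = c) (hx : x₀ ≤ x₁) (ht : t₀ ≤ t₁) (hpq : p < q)
    (hφ : ContDiffOn ℝ j φ (Icc p q))
    (hmaps : ∀ x ∈ Ioo x₀ x₁, ∀ t ∈ Ioo t₀ t₁, x + a * t ∈ Ioo p q) :
    HjCsq c j (fun x t => φ (x + a * t)) x₀ x₁ t₀ t₁
      ≤ (j + 1) * min (t₁ - t₀) ((x₁ - x₀) / c) * ∫ z in Ioo p q, (iteratedDeriv j φ z) ^ 2 := by
  obtain ⟨M, hM⟩ := hφ.exists_bound_iteratedDeriv_Ioo hpq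
  have hG_le : ∀ z ∈ Ioo p q, (iteratedDeriv j φ z) ^ 2 ≤ M ^ 2 := fun z hz => by
    rw [← sq_abs]
    exact pow_le_pow_left₀ (abs_nonneg _) (hM z hz) 2
  have hG_cont : ContinuousOn (fun z => (iteratedDeriv j φ z) ^ 2) (Ioo p q) :=
    hφ.continuousOn_iteratedDeriv_Ioo.pow 2
  have hG_int : IntegrableOn (fun z => (iteratedDeriv j φ z) ^ 2) (Ioo p q) :=
    .of_bound measure_Ioo_lt_top (hG_cont.aestronglyMeasurable measurableSet_Ioo) (M ^ 2)
      (ae_restrict_of_forall_mem measurableSet_Ioo fun z hz => by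
        rw [Real.norm_eq_abs, abs_of_nonneg (sq_nonneg _)]
        exact hG_le z hz)
  have ha : a ≠ 0 := abs_pos.mp (hac ▸ hc)
  rw [HjCsq_comp_add_mul φ a (by rw [← sq_abs, hac]) hc.ne', mul_assoc]
  refine mul_le_mul_of_nonneg_left ?_ (by positivity)
  simpa only [hac] using integral_integral_comp_add_mul_le ha hx ht measurableSet_Ioo hG_int hG_cont
    (fun z _ => sq_nonneg _) hG_le hmaps

theorem stmt2 (x₀ x₁ t₀ t₁ c : ℝ) (hx : x₀ < x₁) (ht : t₀ < t₁) (hc : 0 < c)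
    (j : ℕ) (u₀ w₀ : ℝ → ℝ)
    (hu : ContDiffOn ℝ j u₀ (Set.Icc (x₀ - c * t₁) (x₁ - c * t₀)))
    (hw : ContDiffOn ℝ j w₀ (Set.Icc (x₀ + c * t₀) (x₁ + c * t₁))) :
    HjCsq c j (fun x t => u₀ (x - c * t)) x₀ x₁ t₀ t₁
      ≤ (j + 1) * min (t₁ - t₀) ((x₁ - x₀) / c) *
        ∫ z in Set.Ioo (x₀ - c * t₁) (x₁ - c * t₀), (iteratedDeriv j u₀ z) ^ 2 ∧
    HjCsq c j (fun x t => w₀ (x + c * t)) x₀ x₁ t₀ t₁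
      ≤ (j + 1) * min (t₁ - t₀) ((x₁ - x₀) / c) *
        ∫ z in Set.Ioo (x₀ + c * t₀) (x₁ + c * t₁), (iteratedDeriv j w₀ z) ^ 2 := by
  constructor
  · simpa only [neg_mul, ← sub_eq_add_neg] using
      HjCsq_comp_add_mul_le (a := -c) hc (by rw [abs_neg, abs_of_pos hc]) hx.le ht.le
        (by nlinarith) hu fun x hx t ht => ⟨by nlinarith [hx.1, ht.2], by nlinarith [hx.2, ht.1]⟩
  · exact HjCsq_comp_add_mul_le hc (abs_of_pos hc) hx.le ht.le (by nlinarith) hw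
      fun x hx t ht => ⟨by nlinarith [hx.1, ht.1], by nlinarith [hx.2, ht.2]⟩
end

section
/- Let D=(x₀,x₁)×(t₀,t₁)⊂ℝ² be a space–time rectangle, c>0, and let u₀ be continuously differentiable on the closure of Ω_D⁻=(x₀−ct₁, x₁−ct₀). Define u(x,t):=u₀(x−ct) for (x,t)∈D. Then ‖u‖²_{H¹_c(D)} ≤ (1/c)·‖u₀‖²_{L²(Ω_D⁻)} + (2 h_D²/c)·|u₀|²_{H¹(Ω_D⁻)}, where h_D := (x₁−x₀)+c(t₁−t₀). -/
open MeasureTheory Set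

/-!
Along the characteristics `x - c t = const` the wave `u(x,t) = u₀(x - c t)` is constant, so both
first-order anisotropic derivatives of `u` equal `± u₀'(x - c t)`. For fixed `x`, the substitution
`z = x - c t` maps `(t₀, t₁)` onto a subinterval of `Ω_D⁻` with Jacobian `c`; hence every integral
`∫∫_D w(x - c t)²` is at most `(x₁ - x₀)/c · ∫_{Ω_D⁻} w²`, and `x₁ - x₀ ≤ h_D` gives the claim.
-/

lemma intervalIntegral_comp_sub_mul_le {f : ℝ → ℝ} {a b c t₀ t₁ x : ℝ} (hc : 0 < c)
    (ht : t₀ ≤ t₁) (hf : IntegrableOn f (Ioo a b)) (hf0 : 0 ≤ f)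
    (ha : a ≤ x - c * t₁) (hb : x - c * t₀ ≤ b) :
    ∫ t in t₀..t₁, f (x - c * t) ≤ c⁻¹ * ∫ z in Ioo a b, f z := by
  have hle : x - c * t₁ ≤ x - c * t₀ := by nlinarith
  rw [intervalIntegral.integral_comp_sub_mul f hc.ne', smul_eq_mul,
    intervalIntegral.integral_of_le hle, integral_Ioc_eq_integral_Ioo]
  exact mul_le_mul_of_nonneg_left
    (setIntegral_mono_set hf (ae_of_all _ hf0) (Ioo_subset_Ioo ha hb).eventuallyLE)
    (inv_nonneg.mpr hc.le)

lemma intervalIntegral_intervalIntegral_le_of_eqOn_comp_sub_mul {F : ℝ → ℝ → ℝ} {f : ℝ → ℝ}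
    {c x₀ x₁ t₀ t₁ : ℝ} (hc : 0 < c) (hx : x₀ ≤ x₁) (ht : t₀ ≤ t₁)
    (hf : IntegrableOn f (Ioo (x₀ - c * t₁) (x₁ - c * t₀))) (hf0 : 0 ≤ f)
    (hF : ∀ x ∈ Ioc x₀ x₁, ∀ t ∈ Ioc t₀ t₁, F x t = f (x - c * t)) :
    ∫ x in x₀..x₁, ∫ t in t₀..t₁, F x t
      ≤ (x₁ - x₀) / c * ∫ z in Ioo (x₀ - c * t₁) (x₁ - c * t₀), f z := by
  have hinner : ∀ x ∈ Ioc x₀ x₁,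
      ‖∫ t in t₀..t₁, F x t‖ ≤ c⁻¹ * ∫ z in Ioo (x₀ - c * t₁) (x₁ - c * t₀), f z := by
    intro x hxm
    have hcongr : ∫ t in t₀..t₁, F x t = ∫ t in t₀..t₁, f (x - c * t) := by
      simp only [intervalIntegral.integral_of_le ht]
      exact setIntegral_congr_fun measurableSet_Ioc (hF x hxm)
    rw [hcongr, Real.norm_of_nonneg (intervalIntegral.integral_nonneg ht fun t _ => hf0 _)]
    exact intervalIntegral_comp_sub_mul_le hc ht hf hf0 (by linarith [hxm.1])
      (by linarith [hxm.2])
  -- Bounding through the norm avoids proving that `x ↦ ∫ t, F x t` is integrable.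
  calc ∫ x in x₀..x₁, ∫ t in t₀..t₁, F x t
      ≤ ‖∫ x in x₀..x₁, ∫ t in t₀..t₁, F x t‖ := Real.le_norm_self _
    _ ≤ (c⁻¹ * ∫ z in Ioo (x₀ - c * t₁) (x₁ - c * t₀), f z) * |x₁ - x₀| :=
        intervalIntegral.norm_integral_le_of_norm_le_const fun x hxm =>
          hinner x (uIoc_of_le hx ▸ hxm)
    _ = (x₁ - x₀) / c * ∫ z in Ioo (x₀ - c * t₁) (x₁ - c * t₀), f z := by
        rw [abs_of_nonneg (sub_nonneg.mpr hx)]; ring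

lemma Dc_one_zero_comp_sub_mul {u₀ : ℝ → ℝ} {c x t : ℝ}
    (h : DifferentiableAt ℝ u₀ (x - c * t)) :
    Dc c 1 0 (fun x t => u₀ (x - c * t)) x t = deriv u₀ (x - c * t) := by
  have hx : HasDerivAt (fun y => u₀ (y - c * t)) (deriv u₀ (x - c * t)) x :=
    h.hasDerivAt.comp_sub_const x (c * t)
  simpa [Dc, pdX] using hx.deriv

lemma Dc_zero_one_comp_sub_mul {u₀ : ℝ → ℝ} {c x t : ℝ} (hc : c ≠ 0)
    (h : DifferentiableAt ℝ u₀ (x - c * t)) :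
    Dc c 0 1 (fun x t => u₀ (x - c * t)) x t = -deriv u₀ (x - c * t) := by
  have ht : HasDerivAt (fun s => u₀ (x - c * s)) (deriv u₀ (x - c * t) * -c) t :=
    h.hasDerivAt.comp t (by simpa using ((hasDerivAt_id t).const_mul c).const_sub x)
  simp only [Dc, pdT, Function.iterate_one, Function.iterate_zero, id_eq, pow_one,
    ht.deriv]
  field_simp

lemma HjCsq_one (c : ℝ) (v : ℝ → ℝ → ℝ) (x₀ x₁ t₀ t₁ : ℝ) :
    HjCsq c 1 v x₀ x₁ t₀ t₁
      = (∫ x in x₀..x₁, ∫ t in t₀..t₁, Dc c 1 0 v x t ^ 2)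
        + ∫ x in x₀..x₁, ∫ t in t₀..t₁, Dc c 0 1 v x t ^ 2 := by
  simp [HjCsq, Finset.sum_range_succ]

lemma ContDiffOn.integrableOn_Ioo_deriv_sq {u₀ : ℝ → ℝ} {a b : ℝ} (hab : a < b)
    (hu : ContDiffOn ℝ 1 u₀ (Icc a b)) :
    IntegrableOn (fun z => deriv u₀ z ^ 2) (Ioo a b) := by
  -- `deriv u₀` is junk at `a` and `b`; inside it agrees with the continuous one-sided derivative.
  have hcont : ContinuousOn (fun z => derivWithin u₀ (Icc a b) z ^ 2) (Icc a b) :=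
    (hu.continuousOn_derivWithin (uniqueDiffOn_Icc hab) le_rfl).pow 2
  refine (hcont.integrableOn_Icc.mono_set Ioo_subset_Icc_self).congr_fun (fun z hz => ?_)
    measurableSet_Ioo
  simp only [derivWithin_of_mem_nhds (Icc_mem_nhds hz.1 hz.2)]

theorem stmt3 (x₀ x₁ t₀ t₁ c : ℝ) (hx : x₀ < x₁) (ht : t₀ < t₁) (hc : 0 < c)
    (u₀ : ℝ → ℝ) (hD : ℝ)
    (hu : ContDiffOn ℝ 1 u₀ (Set.Icc (x₀ - c * t₁) (x₁ - c * t₀)))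
    (hhD : hD = (x₁ - x₀) + c * (t₁ - t₀)) :
    hD⁻¹ * (∫ x in x₀..x₁, ∫ t in t₀..t₁, (u₀ (x - c * t)) ^ 2)
      + hD * HjCsq c 1 (fun x t => u₀ (x - c * t)) x₀ x₁ t₀ t₁
      ≤ (1 / c) * (∫ z in Set.Ioo (x₀ - c * t₁) (x₁ - c * t₀), (u₀ z) ^ 2)
        + (2 * hD ^ 2 / c) *
          ∫ z in Set.Ioo (x₀ - c * t₁) (x₁ - c * t₀), (deriv u₀ z) ^ 2 := by
  have hab : x₀ - c * t₁ < x₁ - c * t₀ := by nlinarith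
  have hDx : x₁ - x₀ ≤ hD := by rw [hhD]; nlinarith
  have hmem : ∀ x ∈ Ioc x₀ x₁, ∀ t ∈ Ioc t₀ t₁, x - c * t ∈ Ioo (x₀ - c * t₁) (x₁ - c * t₀) :=
    fun x hxm t htm => ⟨by nlinarith [hxm.1, htm.2], by nlinarith [hxm.2, htm.1]⟩
  have hdiff : ∀ x ∈ Ioc x₀ x₁, ∀ t ∈ Ioc t₀ t₁, DifferentiableAt ℝ u₀ (x - c * t) :=
    fun x hxm t htm => (hu.differentiableOn one_ne_zero).differentiableAt
      (Icc_mem_nhds (hmem x hxm t htm).1 (hmem x hxm t htm).2)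
  have hint₀ : IntegrableOn (fun z => u₀ z ^ 2) (Ioo (x₀ - c * t₁) (x₁ - c * t₀)) :=
    (hu.continuousOn.pow 2).integrableOn_Icc.mono_set Ioo_subset_Icc_self
  have hint₁ := hu.integrableOn_Ioo_deriv_sq hab
  have hL2 := intervalIntegral_intervalIntegral_le_of_eqOn_comp_sub_mul hc hx.le ht.le hint₀
    (fun z => sq_nonneg (u₀ z)) fun _ _ _ _ => rfl
  have hDx₁ := intervalIntegral_intervalIntegral_le_of_eqOn_comp_sub_mul
    (F := fun x t => Dc c 1 0 (fun x t => u₀ (x - c * t)) x t ^ 2) hc hx.le ht.le hint₁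
    (fun z => sq_nonneg (deriv u₀ z)) fun x hxm t htm => by
      rw [Dc_one_zero_comp_sub_mul (hdiff x hxm t htm)]
  have hDt₁ := intervalIntegral_intervalIntegral_le_of_eqOn_comp_sub_mul
    (F := fun x t => Dc c 0 1 (fun x t => u₀ (x - c * t)) x t ^ 2) hc hx.le ht.le hint₁
    (fun z => sq_nonneg (deriv u₀ z)) fun x hxm t htm => by
      rw [Dc_zero_one_comp_sub_mul hc.ne' (hdiff x hxm t htm), neg_sq]
  have hP : 0 ≤ ∫ z in Ioo (x₀ - c * t₁) (x₁ - c * t₀), u₀ z ^ 2 :=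
    integral_nonneg fun z => sq_nonneg _
  have hQ : 0 ≤ ∫ z in Ioo (x₀ - c * t₁) (x₁ - c * t₀), deriv u₀ z ^ 2 :=
    integral_nonneg fun z => sq_nonneg _
  have hDpos : 0 < hD := by linarith
  rw [HjCsq_one]
  calc _ ≤ hD⁻¹ * ((x₁ - x₀) / c * _) + hD * ((x₁ - x₀) / c * _ + (x₁ - x₀) / c * _) := by
        gcongr
    _ ≤ hD⁻¹ * (hD / c * _) + hD * (hD / c * _ + hD / c * _) := by gcongr
    _ = _ := by field_simp; ring
end

section
/- For all natural numbers s, p with 1 ≤ s ≤ p, the factorial quotient satisfies (p−s)! / (p+s)! ≤ (e/2)^{2s²/p} / p^{2s}. -/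
/-!
Put `q = p + 1/2`. Then `(p + s)! / (p - s)! = ∏_{j < s} (q² - (j + 1/2)²)`, and the `j`-th
factor is `q² (1 - m²)` with `m = (j + 1/2) / q`. Since `log (1 - x²)` is concave, the midpoint
rule bounds `log (1 - m²)` from below by `q` times its integral over `[j/q, (j+1)/q]`; summing,
the product is at least `q^{2s} exp (q φ(s/q))`, where `φ` is the primitive of `log (1 - x²)`.
Finally `φ(u)/u²` decreases on `(0, 1]`, so `q φ(s/q) ≥ (s²/q) φ(1)`, and `φ(1) = -2 log (e/2)`.
-/

open Real Set Finset
open scoped Nat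

/-- The primitive of `log (1 - x ^ 2)` vanishing at `0`. -/
noncomputable def phi (x : ℝ) : ℝ :=
  (1 + x) * log (1 + x) - (1 - x) * log (1 - x) - 2 * x

lemma phi_zero : phi 0 = 0 := by simp [phi]

lemma phi_one : phi 1 = -2 * log (exp 1 / 2) := by
  rw [log_div (exp_ne_zero 1) two_ne_zero, log_exp]
  simp only [phi]
  norm_num
  ring

lemma continuous_phi : Continuous phi :=
  ((continuous_mul_log.comp (continuous_const_add 1)).sub
    (continuous_mul_log.comp (continuous_sub_left 1))).sub (continuous_const_mul 2)

lemma log_one_sub_sq {x : ℝ} (hx : x ∈ Ioo (-1 : ℝ) 1) :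
    log (1 - x ^ 2) = log (1 + x) + log (1 - x) := by
  rw [← log_mul (by linarith [hx.1]) (by linarith [hx.2])]
  ring_nf

lemma hasDerivAt_phi {x : ℝ} (hx : x ∈ Ioo (-1 : ℝ) 1) :
    HasDerivAt phi (log (1 - x ^ 2)) x := by
  have h₁ : 1 + x ≠ 0 := by linarith [hx.1]
  have h₂ : 1 - x ≠ 0 := by linarith [hx.2]
  have hp : HasDerivAt (fun y => 1 + y) 1 x := (hasDerivAt_id x).const_add 1
  have hm : HasDerivAt (fun y => 1 - y) (-1) x := by simpa using (hasDerivAt_id x).const_sub 1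
  refine (((hp.mul (hp.log h₁)).sub (hm.mul (hm.log h₂))).sub
    ((hasDerivAt_id x).const_mul 2)).congr_deriv ?_
  rw [log_one_sub_sq hx]
  field_simp
  ring

lemma hasDerivAt_log_one_sub_sq {x : ℝ} (hx : x ∈ Ioo (-1 : ℝ) 1) :
    HasDerivAt (fun y => log (1 - y ^ 2)) (-(2 * x) / (1 - x ^ 2)) x := by
  have hx2 : 1 - x ^ 2 ≠ 0 := by nlinarith [hx.1, hx.2]
  simpa using ((hasDerivAt_pow 2 x).const_sub 1).log hx2

lemma log_one_sub_sq_add_log_one_sub_sq_le {m x : ℝ} (h₁ : m - x ∈ Ioo (-1 : ℝ) 1)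
    (h₂ : m + x ∈ Ioo (-1 : ℝ) 1) :
    log (1 - (m + x) ^ 2) + log (1 - (m - x) ^ 2) ≤ 2 * log (1 - m ^ 2) := by
  obtain ⟨h₁l, h₁r⟩ := h₁
  obtain ⟨h₂l, h₂r⟩ := h₂
  have hA : 0 < 1 - (m + x) ^ 2 := by nlinarith
  have hB : 0 < 1 - (m - x) ^ 2 := by nlinarith
  rw [← log_mul hA.ne' hB.ne', show 2 * log (1 - m ^ 2) = log ((1 - m ^ 2) ^ 2) by
    rw [log_pow, Nat.cast_ofNat]]
  refine log_le_log (mul_pos hA hB) ?_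
  nlinarith [sq_nonneg x, sq_nonneg m, mul_nonneg (sq_nonneg x) (sq_nonneg m)]

/-- The midpoint half of the Hermite–Hadamard inequality for the concave function
`log (1 - x ^ 2) = phi'`. -/
lemma phi_add_sub_phi_sub_le {m d : ℝ} (hd : 0 ≤ d) (h₁ : -1 < m - d) (h₂ : m + d < 1) :
    phi (m + d) - phi (m - d) ≤ 2 * d * log (1 - m ^ 2) := by
  set D : ℝ → ℝ := fun x => phi (m + x) - phi (m - x) - 2 * x * log (1 - m ^ 2)
  have hD : ∀ x ∈ Icc 0 d, HasDerivAt D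
      (log (1 - (m + x) ^ 2) + log (1 - (m - x) ^ 2) - 2 * log (1 - m ^ 2)) x := by
    rintro x ⟨hx₀, hxd⟩
    have hp := (hasDerivAt_phi (x := m + x) ⟨by linarith, by linarith⟩).comp x
      ((hasDerivAt_id x).const_add m)
    have hm := (hasDerivAt_phi (x := m - x) ⟨by linarith, by linarith⟩).comp x
      ((hasDerivAt_id x).const_sub m)
    refine ((hp.sub hm).sub (((hasDerivAt_id x).const_mul 2).mul_const
      (log (1 - m ^ 2)))).congr_deriv (by ring)
  have hanti : AntitoneOn D (Icc 0 d) := by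
    refine antitoneOn_of_hasDerivWithinAt_nonpos (convex_Icc 0 d)
      (fun x hx => (hD x hx).continuousAt.continuousWithinAt)
      (fun x hx => (hD x (interior_subset hx)).hasDerivWithinAt) ?_
    rw [interior_Icc]
    rintro x ⟨hx₀, hxd⟩
    have := log_one_sub_sq_add_log_one_sub_sq_le (m := m) (x := x) ⟨by linarith, by linarith⟩
      ⟨by linarith, by linarith⟩
    linarith
  simpa [D] using hanti (left_mem_Icc.mpr hd) (right_mem_Icc.mpr hd) hd

lemma mul_log_one_sub_sq_le_two_mul_phi {u : ℝ} (hu : u ∈ Ico (0 : ℝ) 1) :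
    u * log (1 - u ^ 2) ≤ 2 * phi u := by
  set k : ℝ → ℝ := fun x => x * log (1 - x ^ 2) - 2 * phi x
  have hk : ∀ x ∈ Ico (0 : ℝ) 1,
      HasDerivAt k (-log (1 - x ^ 2) - 2 * (x ^ 2 / (1 - x ^ 2))) x := by
    rintro x ⟨hx₀, hx₁⟩
    have hx : x ∈ Ioo (-1 : ℝ) 1 := ⟨by linarith, hx₁⟩
    have hx2 : 1 - x ^ 2 ≠ 0 := by nlinarith
    refine (((hasDerivAt_id' x).mul (hasDerivAt_log_one_sub_sq hx)).sub
      ((hasDerivAt_phi hx).const_mul 2)).congr_deriv ?_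
    field_simp
    ring
  have hanti : AntitoneOn k (Ico 0 1) := by
    refine antitoneOn_of_hasDerivWithinAt_nonpos (convex_Ico 0 1)
      (fun x hx => (hk x hx).continuousAt.continuousWithinAt)
      (fun x hx => (hk x (interior_subset hx)).hasDerivWithinAt) ?_
    rw [interior_Ico]
    rintro x ⟨hx₀, hx₁⟩
    have hpos : 0 < 1 - x ^ 2 := by nlinarith
    have hlog := one_sub_inv_le_log_of_pos hpos
    have : 1 - (1 - x ^ 2)⁻¹ = -(x ^ 2 / (1 - x ^ 2)) := by field_simp; ring
    have : 0 ≤ x ^ 2 / (1 - x ^ 2) := by positivity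
    linarith
  simpa [k, phi_zero] using hanti ⟨le_rfl, one_pos⟩ hu hu.1

lemma sq_mul_phi_one_le_phi {u : ℝ} (hu : u ∈ Icc (0 : ℝ) 1) : u ^ 2 * phi 1 ≤ phi u := by
  obtain rfl | hu₀ := hu.1.eq_or_lt
  · simp [phi_zero]
  have hψ : ∀ x ∈ Ioo (0 : ℝ) 1, HasDerivAt (fun y => phi y / y ^ 2)
      ((log (1 - x ^ 2) * x ^ 2 - phi x * (2 * x)) / (x ^ 2) ^ 2) x := by
    rintro x ⟨hx₀, hx₁⟩
    exact ((hasDerivAt_phi ⟨by linarith, hx₁⟩).div (hasDerivAt_pow 2 x)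
      (by positivity)).congr_deriv (by norm_num)
  have hanti : AntitoneOn (fun y => phi y / y ^ 2) (Ioc 0 1) := by
    refine antitoneOn_of_hasDerivWithinAt_nonpos (convex_Ioc 0 1)
      (continuous_phi.continuousOn.div (continuousOn_pow 2)
        fun x hx => pow_ne_zero 2 hx.1.ne')
      (fun x hx => (hψ x (by simpa using hx)).hasDerivWithinAt) ?_
    rw [interior_Ioc]
    rintro x ⟨hx₀, hx₁⟩
    have := mul_log_one_sub_sq_le_two_mul_phi ⟨hx₀.le, hx₁⟩
    refine div_nonpos_of_nonpos_of_nonneg ?_ (by positivity)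
    nlinarith
  have := hanti ⟨hu₀, hu.2⟩ ⟨one_pos, le_rfl⟩ hu.2
  simp only at this
  rw [one_pow, div_one, le_div_iff₀ (by positivity)] at this
  linarith

lemma sq_mul_exp_le_sq_sub_sq {q x : ℝ} (hq : 0 < q) (h₁ : -q < x) (h₂ : x + 1 < q) :
    q ^ 2 * exp (q * (phi ((x + 1) / q) - phi (x / q))) ≤ q ^ 2 - (x + 1 / 2) ^ 2 := by
  have hadd : (x + 1 / 2) / q + 1 / (2 * q) = (x + 1) / q := by field_simp; ring
  have hsub : (x + 1 / 2) / q - 1 / (2 * q) = x / q := by field_simp; ring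
  have hmid := phi_add_sub_phi_sub_le (m := (x + 1 / 2) / q) (d := 1 / (2 * q)) (by positivity)
    (by rw [hsub, lt_div_iff₀ hq]; linarith) (by rw [hadd, div_lt_one hq]; exact h₂)
  rw [hadd, hsub] at hmid
  have hpos : 0 < 1 - ((x + 1 / 2) / q) ^ 2 := by
    rw [sub_pos, sq_lt_one_iff_abs_lt_one, abs_lt, lt_div_iff₀ hq, div_lt_one hq]
    constructor <;> linarith
  have hexp : exp (q * (phi ((x + 1) / q) - phi (x / q))) ≤ 1 - ((x + 1 / 2) / q) ^ 2 := by
    rw [← le_log_iff_exp_le hpos]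
    calc q * (phi ((x + 1) / q) - phi (x / q))
        ≤ q * (2 * (1 / (2 * q)) * log (1 - ((x + 1 / 2) / q) ^ 2)) := by gcongr
      _ = log (1 - ((x + 1 / 2) / q) ^ 2) := by field_simp
  calc q ^ 2 * exp (q * (phi ((x + 1) / q) - phi (x / q)))
      ≤ q ^ 2 * (1 - ((x + 1 / 2) / q) ^ 2) := by gcongr
    _ = q ^ 2 - (x + 1 / 2) ^ 2 := by field_simp

lemma pow_mul_exp_mul_phi_le_prod {q : ℝ} (hq : 0 < q) {s : ℕ} (hs : (s : ℝ) < q) :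
    q ^ (2 * s) * exp (q * phi (s / q)) ≤ ∏ j ∈ range s, (q ^ 2 - (j + 1 / 2) ^ 2) := by
  induction s with
  | zero => simp [phi_zero]
  | succ s ih =>
    push_cast at hs ⊢
    have ih' := ih (by linarith)
    have hstep := sq_mul_exp_le_sq_sub_sq hq (x := s) (by linarith [s.cast_nonneg (α := ℝ)]) hs
    calc q ^ (2 * (s + 1)) * exp (q * phi ((s + 1) / q))
        = q ^ (2 * s) * exp (q * phi (s / q)) *
            (q ^ 2 * exp (q * (phi ((s + 1) / q) - phi (s / q)))) := by
          rw [mul_sub, exp_sub]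
          field_simp
          ring
      _ ≤ (∏ j ∈ range s, (q ^ 2 - (j + 1 / 2) ^ 2)) * (q ^ 2 - (s + 1 / 2) ^ 2) :=
          mul_le_mul ih' hstep (by positivity) (ih'.trans' (by positivity))
      _ = _ := (prod_range_succ _ _).symm

lemma phi_one_nonpos : phi 1 ≤ 0 := by
  rw [phi_one, neg_mul, neg_nonpos]
  have := exp_one_gt_d9
  exact mul_nonneg zero_le_two (log_nonneg (by linarith))

lemma pow_mul_exp_le_prod {p : ℝ} (hp : 0 < p) {s : ℕ} (hsp : (s : ℝ) ≤ p) :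
    p ^ (2 * s) * exp (s ^ 2 * phi 1 / p) ≤
      ∏ j ∈ range s, ((p + 1 / 2) ^ 2 - (j + 1 / 2) ^ 2) := by
  have hq : 0 < p + 1 / 2 := by linarith
  refine le_trans ?_ (pow_mul_exp_mul_phi_le_prod hq (by linarith))
  refine mul_le_mul (pow_le_pow_left₀ hp.le (by linarith) _) (exp_le_exp.mpr ?_) (by positivity)
    (by positivity)
  calc (s : ℝ) ^ 2 * phi 1 / p
      ≤ s ^ 2 * phi 1 / (p + 1 / 2) := by
        rw [div_le_div_iff₀ hp hq]
        exact mul_le_mul_of_nonpos_left (by linarith)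
          (mul_nonpos_of_nonneg_of_nonpos (by positivity) phi_one_nonpos)
    _ = (p + 1 / 2) * ((s / (p + 1 / 2)) ^ 2 * phi 1) := by field_simp
    _ ≤ (p + 1 / 2) * phi (s / (p + 1 / 2)) := by
        gcongr
        exact sq_mul_phi_one_le_phi ⟨by positivity, by rw [div_le_one hq]; linarith⟩

lemma factorial_add_eq_factorial_sub_mul_prod {p s : ℕ} (h : s ≤ p) :
    (p + s)! = (p - s)! * ∏ j ∈ range s, (p + j + 1) * (p - j) := by
  induction s with
  | zero => simp
  | succ s ih =>
    rw [prod_range_succ, ← add_assoc, Nat.factorial_succ, ih (by omega),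
      show p - s = p - (s + 1) + 1 by omega, Nat.factorial_succ]
    ring

lemma cast_factorial_add_eq {p s : ℕ} (h : s ≤ p) :
    ((p + s)! : ℝ) = (p - s)! * ∏ j ∈ range s, (((p : ℝ) + 1 / 2) ^ 2 - (j + 1 / 2) ^ 2) := by
  rw [factorial_add_eq_factorial_sub_mul_prod h]
  push_cast
  congr 1
  refine prod_congr rfl fun j hj => ?_
  rw [Nat.cast_sub (by simp at hj; omega)]
  ring

theorem stmt5_general (s p : ℕ) (hsp : s ≤ p) :
    ((Nat.factorial (p - s) : ℝ) / (Nat.factorial (p + s) : ℝ))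
      ≤ (Real.exp 1 / 2) ^ ((2 * (s : ℝ) ^ 2) / (p : ℝ)) / (p : ℝ) ^ (2 * s) := by
  obtain rfl | hs := s.eq_zero_or_pos
  · simp [(Nat.factorial_pos p).ne']
  have hp : (0 : ℝ) < p := by exact_mod_cast hs.trans_le hsp
  have hbound := pow_mul_exp_le_prod hp (s := s) (by exact_mod_cast hsp)
  have hrpow : (exp 1 / 2) ^ (2 * (s : ℝ) ^ 2 / p) = exp (-(s ^ 2 * phi 1 / p)) := by
    rw [rpow_def_of_pos (by positivity), phi_one]
    ring_nf
  rw [cast_factorial_add_eq hsp, div_mul_cancel_left₀ (by positivity), hrpow, exp_neg,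
    inv_div_left]
  exact inv_anti₀ (by positivity) hbound

theorem stmt5 (s p : ℕ) (hs : 1 ≤ s) (hsp : s ≤ p) :
    ((Nat.factorial (p - s) : ℝ) / (Nat.factorial (p + s) : ℝ))
      ≤ (Real.exp 1 / 2) ^ ((2 * (s : ℝ) ^ 2) / (p : ℝ)) / (p : ℝ) ^ (2 * s) :=
  stmt5_general s p hsp
end

section
/- For all real x with 0 < x < 1, the function f(x) := (1−x)^{1/x − 1} · (1+x)^{−1/x − 1} · 4^x · e^{2−2x} satisfies f(x) ≤ 1. -/
/-!
With `D x = 2x - (1 + x) log (1 + x) + (1 - x) log (1 - x)` (`logDefect`), one has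
`x log f(x) = D x - D 1 · x²`, where `D 1 = 2 - 2 log 2`. Expanding the logarithms gives
`D x = ∑ x^(2k+3) / ((k+1)(2k+3))`, a power series with nonnegative coefficients and no terms
below degree 3, so `D x / x²` is nondecreasing on `[0, 1)`; letting the larger argument tend
to `1` gives `D x ≤ D 1 · x²`.
-/

open Real Filter Topology

noncomputable def logDefect (x : ℝ) : ℝ :=
  2 * x - ((1 + x) * log (1 + x) - (1 - x) * log (1 - x))

lemma continuous_logDefect : Continuous logDefect := by
  unfold logDefect
  have hadd : Continuous fun x : ℝ => (1 + x) * log (1 + x) :=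
    continuous_mul_log.comp (continuous_const.add continuous_id)
  have hsub : Continuous fun x : ℝ => (1 - x) * log (1 - x) :=
    continuous_mul_log.comp (continuous_const.sub continuous_id)
  exact (continuous_const.mul continuous_id).sub (hadd.sub hsub)

lemma logDefect_one : logDefect 1 = 2 - 2 * log 2 := by
  norm_num [logDefect]

lemma hasSum_logDefect {x : ℝ} (hx : |x| < 1) :
    HasSum (fun k : ℕ => x ^ (2 * k + 3) / ((k + 1) * (2 * k + 3))) (logDefect x) := by
  have hx2 : |x ^ 2| < 1 := by rw [abs_pow, sq_lt_one_iff_abs_lt_one, abs_abs]; exact hx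
  have hartanh := (hasSum_nat_add_iff' 1).mpr (hasSum_log_sub_log_of_abs_lt_one hx)
  norm_num only [Finset.sum_range_one, pow_one] at hartanh
  have hlog := (hasSum_pow_div_log_of_abs_lt_one hx2).mul_left x
  have hval : x * -log (1 - x ^ 2) - (log (1 + x) - log (1 - x) - 2 * x) = logDefect x := by
    have hsub : 1 - x ≠ 0 := by linarith [(abs_lt.mp hx).2]
    have hadd : 1 + x ≠ 0 := by linarith [(abs_lt.mp hx).1]
    rw [show 1 - x ^ 2 = (1 - x) * (1 + x) by ring, log_mul hsub hadd, logDefect]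
    ring
  refine hval ▸ (hlog.sub hartanh).congr_fun fun k => ?_
  push_cast
  field_simp
  ring

lemma sq_mul_logDefect_le {x y : ℝ} (hx : 0 ≤ x) (hxy : x ≤ y) (hy : y < 1) :
    y ^ 2 * logDefect x ≤ x ^ 2 * logDefect y := by
  have habs : ∀ {z : ℝ}, 0 ≤ z → z < 1 → |z| < 1 := fun hz hz1 => by rwa [abs_of_nonneg hz]
  refine hasSum_le (fun k => ?_) ((hasSum_logDefect (habs hx (hxy.trans_lt hy))).mul_left _)
    ((hasSum_logDefect (habs (hx.trans hxy) hy)).mul_left _)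
  have hpow : x ^ (2 * k + 1) ≤ y ^ (2 * k + 1) := pow_le_pow_left₀ hx hxy _
  rw [mul_div_assoc', mul_div_assoc']
  refine div_le_div_of_nonneg_right ?_ (by positivity)
  calc y ^ 2 * x ^ (2 * k + 3) = (x * y) ^ 2 * x ^ (2 * k + 1) := by ring
    _ ≤ (x * y) ^ 2 * y ^ (2 * k + 1) := by gcongr
    _ = x ^ 2 * y ^ (2 * k + 3) := by ring

lemma logDefect_le {x : ℝ} (hx : 0 ≤ x) (hx1 : x < 1) : logDefect x ≤ logDefect 1 * x ^ 2 := by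
  have hlhs : Tendsto (fun y : ℝ => y ^ 2 * logDefect x) (𝓝[<] 1) (𝓝 (logDefect x)) := by
    simpa using ((continuous_pow 2).tendsto 1 |>.mul_const (logDefect x)).mono_left
      nhdsWithin_le_nhds
  have hrhs : Tendsto (fun y : ℝ => x ^ 2 * logDefect y) (𝓝[<] 1) (𝓝 (logDefect 1 * x ^ 2)) := by
    rw [mul_comm]
    exact ((continuous_const.mul continuous_logDefect).tendsto 1).mono_left nhdsWithin_le_nhds
  refine le_of_tendsto_of_tendsto hlhs hrhs ?_
  filter_upwards [Ioo_mem_nhdsLT hx1] with y hy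
  exact sq_mul_logDefect_le hx hy.1.le hy.2

theorem stmt6 (x : ℝ) (h0 : 0 < x) (h1 : x < 1) :
    (1 - x) ^ (1 / x - 1) * (1 + x) ^ (-(1 / x) - 1) * (4 : ℝ) ^ x
      * Real.exp (2 - 2 * x) ≤ 1 := by
  have hlog4 : log 4 = 2 * log 2 := by
    rw [show (4 : ℝ) = 2 ^ 2 by norm_num, log_pow]
    norm_num
  have hf : (1 - x) ^ (1 / x - 1) * (1 + x) ^ (-(1 / x) - 1) * (4 : ℝ) ^ x * exp (2 - 2 * x)
      = exp ((logDefect x - logDefect 1 * x ^ 2) / x) := by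
    rw [rpow_def_of_pos (by linarith), rpow_def_of_pos (by linarith),
      rpow_def_of_pos (by norm_num), ← exp_add, ← exp_add, ← exp_add, hlog4, logDefect_one]
    congr 1
    unfold logDefect
    field_simp
    ring
  rw [hf, exp_le_one_iff]
  exact div_nonpos_of_nonpos_of_nonneg (sub_nonpos.mpr (logDefect_le h0.le h1)) h0.le
end

section
/- Let Ω=(x_L,x_R), T>0, Q=Ω×(0,T), and let ε, μ : [x_L,x_R] → ℝ be continuous with ε ≥ ε_* > 0, μ ≥ μ_* > 0; set c(x) := (ε(x)μ(x))^{−1/2} and c_∞ := sup_{x∈Ω} c(x). Let φ, ψ be continuous on the closure of Q, and let (v_E, v_H) be continuously differentiable on the closure of Q and satisfy ∂v_E/∂x + μ ∂v_H/∂t = φ and ∂v_H/∂x + ε ∂v_E/∂t = ψ in Q, with zero initial data v_E(·,0)=v_H(·,0)=0 on Ω and zero Dirichlet boundary data v_E(x_L,·)=v_E(x_R,·)=0 on (0,T). Then for every t∈[0,T], ∫_0^t ∫_{x_L}^{x_R} ( ε v_E² + μ v_H² ) dx ds ≤ t² c_∞² ∫_0^t ∫_{x_L}^{x_R} ( ε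 φ² + μ ψ² ) dx ds. -/
/-!
Energy method. Multiplying the two equations by `2 v_H` and `2 v_E` and adding gives the local
balance `∂ₜ(ε v_E² + μ v_H²) + ∂ₓ(2 v_E v_H) = 2 (v_E ψ + v_H φ)`. Integrated over
`[x_L, x_R] × [0, r]`, the flux term vanishes because `v_E = 0` on the lateral boundary and the
initial energy vanishes, so `E(r) = ∫₀ʳ ∫ 2 (v_E ψ + v_H φ)` with `E(s) = ∫ ε v_E² + μ v_H²`.
Cauchy–Schwarz with the weights `√ε, √μ` and `(εμ)⁻¹ ≤ c_∞²` bounds the source by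
`2 c_∞ √(E s) √(F s)`, `F(s) = ∫ ε φ² + μ ψ²`; Cauchy–Schwarz in time then gives `I' ≤ 2 K √I` for
`I(r) = ∫₀ʳ E` and `K = c_∞ (∫₀ᵗ F)^{1/2}`, and comparing `√I` with `K r` yields `I(t) ≤ K² t²`.
-/

open MeasureTheory Set

open Filter Topology

theorem mul_add_mul_le_of_inv_sqrt_mul_le {ε μ c u w φ ψ : ℝ} (hε : 0 < ε) (hμ : 0 < μ)
    (hc : (√(ε * μ))⁻¹ ≤ c) :
    u * ψ + w * φ ≤ c * (√(ε * u ^ 2 + μ * w ^ 2) * √(ε * φ ^ 2 + μ * ψ ^ 2)) := by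
  have hεμ : 0 < ε * μ := mul_pos hε hμ
  have hc0 : 0 ≤ c := (inv_nonneg.2 (Real.sqrt_nonneg _)).trans hc
  have hc2 : 1 ≤ c ^ 2 * (ε * μ) := by
    have h1 : 1 ≤ c * √(ε * μ) := (inv_le_iff_one_le_mul₀ (Real.sqrt_pos.2 hεμ)).1 hc
    nlinarith [Real.sq_sqrt hεμ.le, Real.sqrt_nonneg (ε * μ)]
  have hcs : ε * μ * (u * ψ + w * φ) ^ 2 ≤ (ε * u ^ 2 + μ * w ^ 2) * (ε * φ ^ 2 + μ * ψ ^ 2) := by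
    nlinarith [sq_nonneg (ε * u * φ - μ * w * ψ)]
  have hsq : (u * ψ + w * φ) ^ 2 ≤ c ^ 2 * ((ε * u ^ 2 + μ * w ^ 2) * (ε * φ ^ 2 + μ * ψ ^ 2)) := by
    nlinarith [sq_nonneg (u * ψ + w * φ)]
  calc u * ψ + w * φ ≤ |u * ψ + w * φ| := le_abs_self _
    _ ≤ √(c ^ 2 * ((ε * u ^ 2 + μ * w ^ 2) * (ε * φ ^ 2 + μ * ψ ^ 2))) := Real.abs_le_sqrt hsq
    _ = c * (√(ε * u ^ 2 + μ * w ^ 2) * √(ε * φ ^ 2 + μ * ψ ^ 2)) := by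
      rw [Real.sqrt_mul (sq_nonneg c), Real.sqrt_sq hc0, Real.sqrt_mul (by positivity)]

theorem le_sq_of_hasDerivAt_le_two_mul_sqrt {I I' : ℝ → ℝ} {K t : ℝ} (hK : 0 ≤ K) (ht : 0 ≤ t)
    (hI : ContinuousOn I (Icc 0 t)) (hI0 : I 0 = 0) (hI_nonneg : ∀ s ∈ Icc 0 t, 0 ≤ I s)
    (hI' : ∀ s ∈ Ioo 0 t, HasDerivAt I (I' s) s)
    (hI'_le : ∀ s ∈ Ioo 0 t, I' s ≤ 2 * K * √(I s)) :
    I t ≤ (K * t) ^ 2 := by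
  have hshift : ∀ δ > 0, √(I t + δ) ≤ K * t + √δ := by
    intro δ hδ
    -- `δ > 0` keeps the root differentiable, and `(√(I + δ))' = I' / (2 √(I + δ)) ≤ K`
    have hanti : AntitoneOn (fun s => √(I s + δ) - K * s) (Icc 0 t) := by
      refine antitoneOn_of_hasDerivWithinAt_nonpos (convex_Icc 0 t)
        (((hI.add continuousOn_const).sqrt).sub (continuousOn_const.mul continuousOn_id))
        (f' := fun s => I' s / (2 * √(I s + δ)) - K) ?_ ?_
      · intro s hs
        rw [interior_Icc] at hs
        have hpos : I s + δ ≠ 0 := by linarith [hI_nonneg s (Ioo_subset_Icc_self hs)]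
        exact ((((hI' s hs).add_const δ).sqrt hpos).sub
          ((hasDerivAt_id s).const_mul K)).hasDerivWithinAt.congr_deriv (by simp)
      · intro s hs
        rw [interior_Icc] at hs
        have hIs := hI_nonneg s (Ioo_subset_Icc_self hs)
        have hroot : √(I s) ≤ √(I s + δ) := Real.sqrt_le_sqrt (by linarith)
        have hpos : 0 < √(I s + δ) := Real.sqrt_pos.2 (by linarith)
        rw [sub_nonpos, div_le_iff₀ (by positivity)]
        nlinarith [hI'_le s hs]
    have hends := hanti (left_mem_Icc.2 ht) (right_mem_Icc.2 ht) ht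
    simp only [hI0, zero_add, mul_zero, sub_zero] at hends
    linarith
  have hlim : Tendsto (fun δ => √(I t + δ) - √δ) (𝓝[>] 0) (𝓝 (√(I t))) := by
    have hcont : Continuous (fun δ => √(I t + δ) - √δ) := by fun_prop
    simpa using (hcont.tendsto 0).mono_left nhdsWithin_le_nhds
  have hroot : √(I t) ≤ K * t :=
    le_of_tendsto hlim (eventually_nhdsWithin_of_forall fun δ hδ => by linarith [hshift δ hδ])
  calc I t = √(I t) ^ 2 := (Real.sq_sqrt (hI_nonneg t (right_mem_Icc.2 ht))).symm
    _ ≤ (K * t) ^ 2 := pow_le_pow_left₀ (Real.sqrt_nonneg _) hroot 2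

theorem ContinuousOn.le_csSup_image_Ioo {f : ℝ → ℝ} {a b x : ℝ} (hab : a < b)
    (hf : ContinuousOn f (Icc a b)) (hx : x ∈ Icc a b) : f x ≤ sSup (f '' Ioo a b) := by
  have hbdd : BddAbove (f '' Ioo a b) :=
    (isCompact_Icc.bddAbove_image hf).mono (image_mono Ioo_subset_Icc_self)
  have hclosure : f x ∈ closure (f '' Ioo a b) := by
    rw [← closure_Ioo hab.ne] at hf hx
    exact hf.image_closure (mem_image_of_mem f hx)
  exact closure_minimal (fun y hy => le_csSup hbdd hy) isClosed_Iic hclosure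

theorem intervalIntegral.integral_sqrt_mul_sqrt_le {f g : ℝ → ℝ} {a b : ℝ} (hab : a ≤ b)
    (hf : IntervalIntegrable f volume a b) (hg : IntervalIntegrable g volume a b)
    (hf0 : ∀ x ∈ Icc a b, 0 ≤ f x) (hg0 : ∀ x ∈ Icc a b, 0 ≤ g x) :
    ∫ x in a..b, √(f x) * √(g x) ≤ √(∫ x in a..b, f x) * √(∫ x in a..b, g x) := by
  have hsq : ∀ {h : ℝ → ℝ}, (∀ x ∈ Icc a b, 0 ≤ h x) →
      ∫ x in Ioc a b, √(h x) ^ (2 : ℝ) = ∫ x in Ioc a b, h x := fun hh0 =>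
    setIntegral_congr_fun measurableSet_Ioc fun x hx => by
      simp [Real.sq_sqrt (hh0 x (Ioc_subset_Icc_self hx))]
  have hmemLp : ∀ {h : ℝ → ℝ}, IntervalIntegrable h volume a b → (∀ x ∈ Icc a b, 0 ≤ h x) →
      MemLp (fun x => √(h x)) (ENNReal.ofReal 2) (volume.restrict (Ioc a b)) := by
    intro h hh hh0
    rw [ENNReal.ofReal_ofNat, memLp_two_iff_integrable_sq
      (Real.continuous_sqrt.comp_aestronglyMeasurable hh.1.aestronglyMeasurable)]
    refine hh.1.congr ((ae_restrict_mem measurableSet_Ioc).mono fun x hx => ?_)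
    simp [Real.sq_sqrt (hh0 x (Ioc_subset_Icc_self hx))]
  have holder := integral_mul_le_Lp_mul_Lq_of_nonneg Real.HolderConjugate.two_two
    (Eventually.of_forall fun x => Real.sqrt_nonneg (f x))
    (Eventually.of_forall fun x => Real.sqrt_nonneg (g x)) (hmemLp hf hf0) (hmemLp hg hg0)
  rw [hsq hf0, hsq hg0, ← Real.sqrt_eq_rpow, ← Real.sqrt_eq_rpow] at holder
  simpa only [intervalIntegral.integral_of_le hab] using holder

theorem intervalIntegral.integral_mul_add_mul_le {a b c : ℝ} (hab : a ≤ b) {ε μ u w φ ψ : ℝ → ℝ}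
    (hε : ContinuousOn ε (Icc a b)) (hμ : ContinuousOn μ (Icc a b))
    (hu : ContinuousOn u (Icc a b)) (hw : ContinuousOn w (Icc a b))
    (hφ : ContinuousOn φ (Icc a b)) (hψ : ContinuousOn ψ (Icc a b))
    (hε0 : ∀ x ∈ Icc a b, 0 < ε x) (hμ0 : ∀ x ∈ Icc a b, 0 < μ x)
    (hc : ∀ x ∈ Icc a b, (√(ε x * μ x))⁻¹ ≤ c) :
    ∫ x in a..b, (u x * ψ x + w x * φ x) ≤
      c * (√(∫ x in a..b, (ε x * u x ^ 2 + μ x * w x ^ 2)) *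
        √(∫ x in a..b, (ε x * φ x ^ 2 + μ x * ψ x ^ 2))) := by
  have hc0 : 0 ≤ c := (inv_nonneg.2 (Real.sqrt_nonneg _)).trans (hc a (left_mem_Icc.2 hab))
  have hA : ContinuousOn (fun x => ε x * u x ^ 2 + μ x * w x ^ 2) (Icc a b) :=
    (hε.mul (hu.pow 2)).add (hμ.mul (hw.pow 2))
  have hB : ContinuousOn (fun x => ε x * φ x ^ 2 + μ x * ψ x ^ 2) (Icc a b) :=
    (hε.mul (hφ.pow 2)).add (hμ.mul (hψ.pow 2))
  have hA0 : ∀ x ∈ Icc a b, 0 ≤ ε x * u x ^ 2 + μ x * w x ^ 2 := fun x hx => by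
    have := hε0 x hx; have := hμ0 x hx; positivity
  have hB0 : ∀ x ∈ Icc a b, 0 ≤ ε x * φ x ^ 2 + μ x * ψ x ^ 2 := fun x hx => by
    have := hε0 x hx; have := hμ0 x hx; positivity
  calc ∫ x in a..b, (u x * ψ x + w x * φ x)
      ≤ ∫ x in a..b, c * (√(ε x * u x ^ 2 + μ x * w x ^ 2) * √(ε x * φ x ^ 2 + μ x * ψ x ^ 2)) :=
        intervalIntegral.integral_mono_on hab
          (((hu.mul hψ).add (hw.mul hφ)).intervalIntegrable_of_Icc hab)
          ((continuousOn_const.mul (hA.sqrt.mul hB.sqrt)).intervalIntegrable_of_Icc hab)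
          fun x hx => mul_add_mul_le_of_inv_sqrt_mul_le (hε0 x hx) (hμ0 x hx) (hc x hx)
    _ = c * ∫ x in a..b, √(ε x * u x ^ 2 + μ x * w x ^ 2) * √(ε x * φ x ^ 2 + μ x * ψ x ^ 2) :=
        intervalIntegral.integral_const_mul _ _
    _ ≤ _ := mul_le_mul_of_nonneg_left (intervalIntegral.integral_sqrt_mul_sqrt_le hab
        (hA.intervalIntegrable_of_Icc hab) (hB.intervalIntegrable_of_Icc hab) hA0 hB0) hc0

theorem integral_le_sq_mul_sq_mul_integral {E F D : ℝ → ℝ} {c t : ℝ} (hc : 0 ≤ c) (ht : 0 ≤ t)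
    (hE : ContinuousOn E (Icc 0 t)) (hF : ContinuousOn F (Icc 0 t)) (hD : ContinuousOn D (Icc 0 t))
    (hE0 : ∀ s ∈ Icc 0 t, 0 ≤ E s) (hF0 : ∀ s ∈ Icc 0 t, 0 ≤ F s)
    (hED : ∀ r ∈ Ioo 0 t, E r ≤ ∫ s in 0..r, D s)
    (hDEF : ∀ s ∈ Icc 0 t, D s ≤ 2 * c * (√(E s) * √(F s))) :
    ∫ s in 0..t, E s ≤ t ^ 2 * c ^ 2 * ∫ s in 0..t, F s := by
  have hsub : ∀ r ∈ Icc 0 t, Icc 0 r ⊆ Icc 0 t := fun r hr => Icc_subset_Icc_right hr.2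
  have hint : ∀ {G : ℝ → ℝ}, ContinuousOn G (Icc 0 t) → ∀ r ∈ Icc 0 t,
      IntervalIntegrable G volume 0 r := fun hG r hr =>
    (hG.mono (hsub r hr)).intervalIntegrable_of_Icc hr.1
  set J := ∫ s in 0..t, F s
  have hJ0 : 0 ≤ J := intervalIntegral.integral_nonneg ht hF0
  have hbound : ∀ r ∈ Ioo 0 t, E r ≤ 2 * (c * √J) * √(∫ s in 0..r, E s) := fun r hr' => by
    have hr : r ∈ Icc 0 t := Ioo_subset_Icc_self hr'
    have hJr : ∫ s in 0..r, F s ≤ J := intervalIntegral.integral_mono_interval le_rfl hr.1 hr.2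
      ((ae_restrict_mem measurableSet_Ioc).mono fun s hs => hF0 s (Ioc_subset_Icc_self hs))
      (hint hF t (right_mem_Icc.2 ht))
    calc E r ≤ ∫ s in 0..r, D s := hED r hr'
      _ ≤ ∫ s in 0..r, 2 * c * (√(E s) * √(F s)) :=
        intervalIntegral.integral_mono_on hr.1 (hint hD r hr)
          (hint (continuousOn_const.mul (hE.sqrt.mul hF.sqrt)) r hr)
          fun s hs => hDEF s (hsub r hr hs)
      _ = 2 * c * ∫ s in 0..r, √(E s) * √(F s) := intervalIntegral.integral_const_mul _ _
      _ ≤ 2 * c * (√(∫ s in 0..r, E s) * √(∫ s in 0..r, F s)) := by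
        gcongr
        exact intervalIntegral.integral_sqrt_mul_sqrt_le hr.1 (hint hE r hr) (hint hF r hr)
          (fun s hs => hE0 s (hsub r hr hs)) (fun s hs => hF0 s (hsub r hr hs))
      _ ≤ 2 * c * (√(∫ s in 0..r, E s) * √J) := by gcongr
      _ = 2 * (c * √J) * √(∫ s in 0..r, E s) := by ring
  have hprimitive : ContinuousOn (fun r => ∫ s in 0..r, E s) (Icc 0 t) := by
    simpa [uIcc_of_le ht] using intervalIntegral.continuousOn_primitive_interval
      (hE.integrableOn_Icc.mono_set (uIcc_of_le ht).subset)
  calc ∫ s in 0..t, E s ≤ (c * √J * t) ^ 2 :=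
        le_sq_of_hasDerivAt_le_two_mul_sqrt (by positivity) ht hprimitive
          intervalIntegral.integral_same
          (fun r hr => intervalIntegral.integral_nonneg hr.1 fun s hs => hE0 s (hsub r hr hs))
          (fun r hr => intervalIntegral.integral_hasDerivAt_right
            (hint hE r (Ioo_subset_Icc_self hr))
            ((hE.mono Ioo_subset_Icc_self).stronglyMeasurableAtFilter isOpen_Ioo r hr)
            (hE.continuousAt (Icc_mem_nhds hr.1 hr.2)))
          hbound
    _ = t ^ 2 * c ^ 2 * J := by rw [mul_pow, mul_pow, Real.sq_sqrt hJ0]; ring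

section

variable {E : Type*} [NormedAddCommGroup E] [NormedSpace ℝ E]

theorem intervalIntegral.continuousOn_parametric_of_continuousOn {F : ℝ → ℝ → E} {a b c d : ℝ}
    (hab : a ≤ b) (hcd : c ≤ d) (hF : ContinuousOn (Function.uncurry F) (Icc a b ×ˢ Icc c d)) :
    ContinuousOn (fun y => ∫ x in a..b, F x y) (Icc c d) := by
  -- clamp both variables into the rectangle to get a globally continuous integrand
  set G : ℝ → ℝ → E := fun y x => F (projIcc a b hab x) (projIcc c d hcd y)
  have hG : Continuous (Function.uncurry G) :=
    hF.comp_continuous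
      (f := fun p : ℝ × ℝ => ((projIcc a b hab p.2 : ℝ), (projIcc c d hcd p.1 : ℝ)))
      (by fun_prop) fun p => ⟨(projIcc a b hab p.2).2, (projIcc c d hcd p.1).2⟩
  refine (intervalIntegral.continuous_parametric_intervalIntegral_of_continuous' hG a b
    ).continuousOn.congr fun y hy => intervalIntegral.integral_congr fun x hx => ?_
  rw [uIcc_of_le hab] at hx
  simp [G, projIcc_of_mem _ hx, projIcc_of_mem _ hy]

theorem HasFDerivWithinAt.hasDerivAt_comp_prodMk_left {f : ℝ × ℝ → E} {f' : ℝ × ℝ →L[ℝ] E}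
    {s t : Set ℝ} {x y : ℝ} (hf : HasFDerivWithinAt f f' (s ×ˢ t) (x, y)) (hs : s ∈ 𝓝 x)
    (hy : y ∈ t) : HasDerivAt (fun x => f (x, y)) (f' (1, 0)) x := by
  have hline : HasDerivWithinAt (·, y) ((1 : ℝ), (0 : ℝ)) s x :=
    ((hasDerivAt_id' x).prodMk (hasDerivAt_const x y)).hasDerivWithinAt
  exact (hf.comp_hasDerivWithinAt (t := s ×ˢ t) x hline fun _ hx => ⟨hx, hy⟩).hasDerivAt hs

theorem HasFDerivWithinAt.hasDerivAt_comp_prodMk_right {f : ℝ × ℝ → E} {f' : ℝ × ℝ →L[ℝ] E}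
    {s t : Set ℝ} {x y : ℝ} (hf : HasFDerivWithinAt f f' (s ×ˢ t) (x, y)) (hx : x ∈ s)
    (ht : t ∈ 𝓝 y) : HasDerivAt (fun y => f (x, y)) (f' (0, 1)) y := by
  have hline : HasDerivWithinAt (x, ·) ((0 : ℝ), (1 : ℝ)) t y :=
    ((hasDerivAt_const y x).prodMk (hasDerivAt_id' y)).hasDerivWithinAt
  exact (hf.comp_hasDerivWithinAt (t := s ×ˢ t) y hline fun _ hy => ⟨hx, hy⟩).hasDerivAt ht

variable [CompleteSpace E]

theorem intervalIntegral_divergence_of_hasDerivAt_slices {a b c d : ℝ} (hab : a ≤ b) (hcd : c ≤ d)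
    {f g f' g' : ℝ → ℝ → E}
    (hf : ContinuousOn (Function.uncurry f) (Icc a b ×ˢ Icc c d))
    (hg : ContinuousOn (Function.uncurry g) (Icc a b ×ˢ Icc c d))
    (hf' : ContinuousOn (Function.uncurry f') (Icc a b ×ˢ Icc c d))
    (hg' : ContinuousOn (Function.uncurry g') (Icc a b ×ˢ Icc c d))
    (hfx : ∀ x ∈ Ioo a b, ∀ y ∈ Icc c d, HasDerivAt (f · y) (f' x y) x)
    (hgy : ∀ x ∈ Icc a b, ∀ y ∈ Ioo c d, HasDerivAt (g x ·) (g' x y) y) :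
    ∫ y in c..d, ∫ x in a..b, (f' x y + g' x y) =
      (∫ y in c..d, (f b y - f a y)) + ∫ x in a..b, (g x d - g x c) := by
  have hslice_f' : ∀ y ∈ Icc c d, IntervalIntegrable (f' · y) volume a b := fun y hy =>
    (hf'.uncurry_right y hy).intervalIntegrable_of_Icc hab
  have hslice_g' : ∀ y ∈ Icc c d, IntervalIntegrable (g' · y) volume a b := fun y hy =>
    (hg'.uncurry_right y hy).intervalIntegrable_of_Icc hab
  have hftc_x : ∀ y ∈ Icc c d, ∫ x in a..b, f' x y = f b y - f a y := fun y hy =>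
    intervalIntegral.integral_eq_sub_of_hasDerivAt_of_le hab (hf.uncurry_right y hy)
      (fun x hx => hfx x hx y hy) (hslice_f' y hy)
  have hftc_y : ∀ x ∈ Icc a b, ∫ y in c..d, g' x y = g x d - g x c := fun x hx =>
    intervalIntegral.integral_eq_sub_of_hasDerivAt_of_le hcd (hg.uncurry_left x hx)
      (fun y hy => hgy x hx y hy) ((hg'.uncurry_left x hx).intervalIntegrable_of_Icc hcd)
  have hswap : ∫ y in c..d, ∫ x in a..b, g' x y = ∫ x in a..b, ∫ y in c..d, g' x y := by
    refine (intervalIntegral_intervalIntegral_swap ?_).symm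
    rw [uIoc_of_le hab, uIoc_of_le hcd]
    exact (hg'.integrableOn_compact (isCompact_Icc.prod isCompact_Icc)).mono_set
      (prod_mono Ioc_subset_Icc_self Ioc_subset_Icc_self)
  calc ∫ y in c..d, ∫ x in a..b, (f' x y + g' x y)
      = ∫ y in c..d, ((f b y - f a y) + ∫ x in a..b, g' x y) := by
        refine intervalIntegral.integral_congr fun y hy => ?_
        rw [uIcc_of_le hcd] at hy
        rw [intervalIntegral.integral_add (hslice_f' y hy) (hslice_g' y hy), hftc_x y hy]
    _ = (∫ y in c..d, (f b y - f a y)) + ∫ y in c..d, ∫ x in a..b, g' x y := by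
        refine intervalIntegral.integral_add ?_ ?_
        · exact ((hf.uncurry_left b (right_mem_Icc.2 hab)).sub
            (hf.uncurry_left a (left_mem_Icc.2 hab))).intervalIntegrable_of_Icc hcd
        · exact (intervalIntegral.continuousOn_parametric_of_continuousOn hab hcd hg'
            ).intervalIntegrable_of_Icc hcd
    _ = _ := by
        rw [hswap]
        congr 1
        refine intervalIntegral.integral_congr fun x hx => ?_
        rw [uIcc_of_le hab] at hx
        exact hftc_y x hx

end

theorem intervalIntegral.continuousOn_integral_mul_sq_add_mul_sq {ε μ : ℝ → ℝ}
    {u w : ℝ → ℝ → ℝ} {a b c d : ℝ} (hab : a ≤ b) (hcd : c ≤ d)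
    (hε : ContinuousOn ε (Icc a b)) (hμ : ContinuousOn μ (Icc a b))
    (hu : ContinuousOn (fun p : ℝ × ℝ => u p.1 p.2) (Icc a b ×ˢ Icc c d))
    (hw : ContinuousOn (fun p : ℝ × ℝ => w p.1 p.2) (Icc a b ×ˢ Icc c d)) :
    ContinuousOn (fun y => ∫ x in a..b, (ε x * u x y ^ 2 + μ x * w x y ^ 2)) (Icc c d) :=
  intervalIntegral.continuousOn_parametric_of_continuousOn hab hcd
    (F := fun x y => ε x * u x y ^ 2 + μ x * w x y ^ 2)
    (((hε.comp continuousOn_fst fun _ hp => hp.1).fun_mul (hu.fun_pow 2)).fun_add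
      ((hμ.comp continuousOn_fst fun _ hp => hp.1).fun_mul (hw.fun_pow 2)))

theorem ContDiffOn.exists_continuousOn_partialDerivs {v : ℝ → ℝ → ℝ} {a b c d : ℝ} (hab : a < b)
    (hcd : c < d) (hv : ContDiffOn ℝ 1 (fun p : ℝ × ℝ => v p.1 p.2) (Icc a b ×ˢ Icc c d)) :
    ∃ vx vy : ℝ → ℝ → ℝ,
      ContinuousOn (fun p : ℝ × ℝ => vx p.1 p.2) (Icc a b ×ˢ Icc c d) ∧
      ContinuousOn (fun p : ℝ × ℝ => vy p.1 p.2) (Icc a b ×ˢ Icc c d) ∧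
      (∀ x ∈ Ioo a b, ∀ y ∈ Icc c d, HasDerivAt (v · y) (vx x y) x) ∧
      (∀ x ∈ Icc a b, ∀ y ∈ Ioo c d, HasDerivAt (v x ·) (vy x y) y) := by
  set R := Icc a b ×ˢ Icc c d
  set Dv := fderivWithin ℝ (fun p : ℝ × ℝ => v p.1 p.2) R
  have hDv : ∀ w, ContinuousOn (fun p => Dv p w) R := fun w =>
    (hv.continuousOn_fderivWithin ((uniqueDiffOn_Icc hab).prod (uniqueDiffOn_Icc hcd)) le_rfl
      ).clm_apply continuousOn_const
  have hderiv : ∀ p ∈ R, HasFDerivWithinAt (fun p : ℝ × ℝ => v p.1 p.2) (Dv p) R p :=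
    fun p hp => (hv.differentiableOn one_ne_zero p hp).hasFDerivWithinAt
  refine ⟨fun x y => Dv (x, y) (1, 0), fun x y => Dv (x, y) (0, 1), hDv _, hDv _, ?_, ?_⟩
  · exact fun x hx y hy => (hderiv _ ⟨Ioo_subset_Icc_self hx, hy⟩).hasDerivAt_comp_prodMk_left
      (Icc_mem_nhds hx.1 hx.2) hy
  · exact fun x hx y hy => (hderiv _ ⟨hx, Ioo_subset_Icc_self hy⟩).hasDerivAt_comp_prodMk_right
      hx (Icc_mem_nhds hy.1 hy.2)

theorem maxwell_energy_identity {xL xR T r : ℝ} {ε μ : ℝ → ℝ} {φ ψ vE vH : ℝ → ℝ → ℝ}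
    (hxLR : xL < xR) (hεcont : ContinuousOn ε (Icc xL xR)) (hμcont : ContinuousOn μ (Icc xL xR))
    (hvE : ContDiffOn ℝ 1 (fun p : ℝ × ℝ => vE p.1 p.2) (Icc xL xR ×ˢ Icc 0 T))
    (hvH : ContDiffOn ℝ 1 (fun p : ℝ × ℝ => vH p.1 p.2) (Icc xL xR ×ˢ Icc 0 T))
    (hPDE1 : ∀ x ∈ Ioo xL xR, ∀ t ∈ Ioo 0 T, pdX vE x t + μ x * pdT vH x t = φ x t)
    (hPDE2 : ∀ x ∈ Ioo xL xR, ∀ t ∈ Ioo 0 T, pdX vH x t + ε x * pdT vE x t = ψ x t)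
    (hIC : ∀ x ∈ Icc xL xR, vE x 0 = 0 ∧ vH x 0 = 0)
    (hBC : ∀ t ∈ Icc (0 : ℝ) T, vE xL t = 0 ∧ vE xR t = 0) (hr : r ∈ Ioc 0 T) :
    ∫ x in xL..xR, (ε x * vE x r ^ 2 + μ x * vH x r ^ 2) =
      ∫ s in 0..r, ∫ x in xL..xR, 2 * (vE x s * ψ x s + vH x s * φ x s) := by
  have hsT : ∀ s ∈ Icc 0 r, s ∈ Icc 0 T := fun s hs => ⟨hs.1, hs.2.trans hr.2⟩
  have hR : Icc xL xR ×ˢ Icc 0 r ⊆ Icc xL xR ×ˢ Icc 0 T := fun p hp => ⟨hp.1, hsT _ hp.2⟩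
  obtain ⟨Ex, Et, hEx, hEt, hvE_x, hvE_t⟩ :=
    (hvE.mono hR).exists_continuousOn_partialDerivs hxLR hr.1
  obtain ⟨Hx, Ht, hHx, hHt, hvH_x, hvH_t⟩ :=
    (hvH.mono hR).exists_continuousOn_partialDerivs hxLR hr.1
  have hE := hvE.continuousOn.mono hR
  have hH := hvH.continuousOn.mono hR
  have hε : ContinuousOn (fun p : ℝ × ℝ => ε p.1) (Icc xL xR ×ˢ Icc 0 r) :=
    hεcont.comp continuousOn_fst fun _ hp => hp.1
  have hμ : ContinuousOn (fun p : ℝ × ℝ => μ p.1) (Icc xL xR ×ˢ Icc 0 r) :=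
    hμcont.comp continuousOn_fst fun _ hp => hp.1
  have hdiv := intervalIntegral_divergence_of_hasDerivAt_slices hxLR.le hr.1.le
    (f := fun x s => 2 * (vE x s * vH x s)) (g := fun x s => ε x * vE x s ^ 2 + μ x * vH x s ^ 2)
    (f' := fun x s => 2 * (Ex x s * vH x s + vE x s * Hx x s))
    (g' := fun x s => 2 * (ε x * vE x s * Et x s + μ x * vH x s * Ht x s))
    (continuousOn_const.fun_mul (hE.fun_mul hH))
    ((hε.fun_mul (hE.fun_pow 2)).fun_add (hμ.fun_mul (hH.fun_pow 2)))
    (continuousOn_const.fun_mul ((hEx.fun_mul hH).fun_add (hE.fun_mul hHx)))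
    (continuousOn_const.fun_mul (((hε.fun_mul hE).fun_mul hEt).fun_add
      ((hμ.fun_mul hH).fun_mul hHt)))
    (fun x hx s hs => ((hvE_x x hx s hs).fun_mul (hvH_x x hx s hs)).const_mul 2)
    (fun x hx s hs => by
      convert (((hvE_t x hx s hs).fun_pow 2).const_mul (ε x)).fun_add
        (((hvH_t x hx s hs).fun_pow 2).const_mul (μ x)) using 1
      ring)
  have hflux : ∫ s in 0..r, (2 * (vE xR s * vH xR s) - 2 * (vE xL s * vH xL s)) = 0 :=
    (intervalIntegral.integral_congr_Ioo_of_le hr.1.le fun s hs => by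
      simp [(hBC s (hsT s (Ioo_subset_Icc_self hs))).1, (hBC s (hsT s (Ioo_subset_Icc_self hs))).2]
      ).trans intervalIntegral.integral_zero
  have hinit : ∫ x in xL..xR, ((ε x * vE x r ^ 2 + μ x * vH x r ^ 2) -
      (ε x * vE x 0 ^ 2 + μ x * vH x 0 ^ 2)) =
      ∫ x in xL..xR, (ε x * vE x r ^ 2 + μ x * vH x r ^ 2) :=
    intervalIntegral.integral_congr_Ioo_of_le hxLR.le fun x hx => by
      simp [(hIC x (Ioo_subset_Icc_self hx)).1, (hIC x (Ioo_subset_Icc_self hx)).2]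
  rw [hflux, zero_add, hinit] at hdiv
  rw [← hdiv]
  refine intervalIntegral.integral_congr_Ioo_of_le hr.1.le fun s hs =>
    intervalIntegral.integral_congr_Ioo_of_le hxLR.le fun x hx => ?_
  have hs' : s ∈ Ioo 0 T := ⟨hs.1, hs.2.trans_le hr.2⟩
  have h1 := hPDE1 x hx s hs'
  have h2 := hPDE2 x hx s hs'
  rw [pdX, pdT, (hvE_x x hx s (Ioo_subset_Icc_self hs)).deriv,
    (hvH_t x (Ioo_subset_Icc_self hx) s hs).deriv] at h1
  rw [pdX, pdT, (hvH_x x hx s (Ioo_subset_Icc_self hs)).deriv,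
    (hvE_t x (Ioo_subset_Icc_self hx) s hs).deriv] at h2
  linear_combination (2 * vE x s) * h2 + (2 * vH x s) * h1

theorem stmt10_general
    (xL xR T εstar μstar : ℝ) (hx : xL < xR)
    (ε μ : ℝ → ℝ)
    (hεcont : ContinuousOn ε (Set.Icc xL xR)) (hμcont : ContinuousOn μ (Set.Icc xL xR))
    (hεstar : 0 < εstar) (hμstar : 0 < μstar)
    (hε : ∀ x ∈ Set.Icc xL xR, εstar ≤ ε x) (hμ : ∀ x ∈ Set.Icc xL xR, μstar ≤ μ x)
    (φ ψ vE vH : ℝ → ℝ → ℝ)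
    (hφ : ContinuousOn (fun p : ℝ × ℝ => φ p.1 p.2) (Set.Icc xL xR ×ˢ Set.Icc 0 T))
    (hψ : ContinuousOn (fun p : ℝ × ℝ => ψ p.1 p.2) (Set.Icc xL xR ×ˢ Set.Icc 0 T))
    (hvE : ContDiffOn ℝ 1 (fun p : ℝ × ℝ => vE p.1 p.2) (Set.Icc xL xR ×ˢ Set.Icc 0 T))
    (hvH : ContDiffOn ℝ 1 (fun p : ℝ × ℝ => vH p.1 p.2) (Set.Icc xL xR ×ˢ Set.Icc 0 T))
    (hPDE1 : ∀ x ∈ Set.Ioo xL xR, ∀ t ∈ Set.Ioo 0 T,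
      pdX vE x t + μ x * pdT vH x t = φ x t)
    (hPDE2 : ∀ x ∈ Set.Ioo xL xR, ∀ t ∈ Set.Ioo 0 T,
      pdX vH x t + ε x * pdT vE x t = ψ x t)
    (hIC : ∀ x ∈ Set.Icc xL xR, vE x 0 = 0 ∧ vH x 0 = 0)
    (hBC : ∀ t ∈ Set.Icc (0 : ℝ) T, vE xL t = 0 ∧ vE xR t = 0)
    (cinf : ℝ)
    (hcinf : cinf = sSup ((fun x => (Real.sqrt (ε x * μ x))⁻¹) '' Set.Ioo xL xR)) :
    ∀ t ∈ Set.Icc (0 : ℝ) T,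
      (∫ s in (0 : ℝ)..t, ∫ x in xL..xR, (ε x * (vE x s) ^ 2 + μ x * (vH x s) ^ 2))
        ≤ t ^ 2 * cinf ^ 2 *
          ∫ s in (0 : ℝ)..t, ∫ x in xL..xR, (ε x * (φ x s) ^ 2 + μ x * (ψ x s) ^ 2) := by
  intro t ht
  have hε₀ : ∀ x ∈ Icc xL xR, 0 < ε x := fun x hx => hεstar.trans_le (hε x hx)
  have hμ₀ : ∀ x ∈ Icc xL xR, 0 < μ x := fun x hx => hμstar.trans_le (hμ x hx)
  have hc : ∀ y ∈ Icc xL xR, (√(ε y * μ y))⁻¹ ≤ cinf := fun y hy => hcinf ▸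
    ((hεcont.mul hμcont).sqrt.inv₀ fun z hz => (Real.sqrt_pos.2 (mul_pos (hε₀ z hz)
      (hμ₀ z hz))).ne').le_csSup_image_Ioo hx hy
  have henergy_nonneg : ∀ u w : ℝ → ℝ → ℝ, ∀ s ∈ Icc 0 t,
      0 ≤ ∫ x in xL..xR, (ε x * u x s ^ 2 + μ x * w x s ^ 2) := fun u w s _ =>
    intervalIntegral.integral_nonneg hx.le fun y hy => by
      have := hε₀ y hy; have := hμ₀ y hy; positivity
  have hT : 0 ≤ T := ht.1.trans ht.2
  have htT : Icc 0 t ⊆ Icc 0 T := Icc_subset_Icc_right ht.2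
  refine integral_le_sq_mul_sq_mul_integral
    (D := fun s => ∫ x in xL..xR, 2 * (vE x s * ψ x s + vH x s * φ x s))
    ((inv_nonneg.2 (Real.sqrt_nonneg _)).trans (hc xL (left_mem_Icc.2 hx.le))) ht.1
    ((intervalIntegral.continuousOn_integral_mul_sq_add_mul_sq hx.le hT hεcont hμcont
      hvE.continuousOn hvH.continuousOn).mono htT)
    ((intervalIntegral.continuousOn_integral_mul_sq_add_mul_sq hx.le hT hεcont hμcont hφ hψ).mono
      htT)
    ((intervalIntegral.continuousOn_parametric_of_continuousOn hx.le hT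
      (F := fun x s => 2 * (vE x s * ψ x s + vH x s * φ x s))
      (continuousOn_const.fun_mul ((hvE.continuousOn.fun_mul hψ).fun_add
        (hvH.continuousOn.fun_mul hφ)))).mono htT)
    (henergy_nonneg vE vH) (henergy_nonneg φ ψ)
    (fun r hr => (maxwell_energy_identity hx hεcont hμcont hvE hvH hPDE1 hPDE2 hIC hBC
      ⟨hr.1, hr.2.le.trans ht.2⟩).le) fun s hs => ?_
  rw [intervalIntegral.integral_const_mul, mul_assoc]
  exact mul_le_mul_of_nonneg_left (intervalIntegral.integral_mul_add_mul_le hx.le hεcont hμcont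
    (hvE.continuousOn.uncurry_right s (htT hs)) (hvH.continuousOn.uncurry_right s (htT hs))
    (hφ.uncurry_right s (htT hs)) (hψ.uncurry_right s (htT hs)) hε₀ hμ₀ hc) zero_le_two

theorem stmt10
    (xL xR T εstar μstar : ℝ) (hx : xL < xR) (hT : 0 < T)
    (ε μ : ℝ → ℝ)
    (hεcont : ContinuousOn ε (Set.Icc xL xR)) (hμcont : ContinuousOn μ (Set.Icc xL xR))
    (hεstar : 0 < εstar) (hμstar : 0 < μstar)
    (hε : ∀ x ∈ Set.Icc xL xR, εstar ≤ ε x) (hμ : ∀ x ∈ Set.Icc xL xR, μstar ≤ μ x)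
    (φ ψ vE vH : ℝ → ℝ → ℝ)
    (hφ : ContinuousOn (fun p : ℝ × ℝ => φ p.1 p.2) (Set.Icc xL xR ×ˢ Set.Icc 0 T))
    (hψ : ContinuousOn (fun p : ℝ × ℝ => ψ p.1 p.2) (Set.Icc xL xR ×ˢ Set.Icc 0 T))
    (hvE : ContDiffOn ℝ 1 (fun p : ℝ × ℝ => vE p.1 p.2) (Set.Icc xL xR ×ˢ Set.Icc 0 T))
    (hvH : ContDiffOn ℝ 1 (fun p : ℝ × ℝ => vH p.1 p.2) (Set.Icc xL xR ×ˢ Set.Icc 0 T))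
    (hPDE1 : ∀ x ∈ Set.Ioo xL xR, ∀ t ∈ Set.Ioo 0 T,
      pdX vE x t + μ x * pdT vH x t = φ x t)
    (hPDE2 : ∀ x ∈ Set.Ioo xL xR, ∀ t ∈ Set.Ioo 0 T,
      pdX vH x t + ε x * pdT vE x t = ψ x t)
    (hIC : ∀ x ∈ Set.Icc xL xR, vE x 0 = 0 ∧ vH x 0 = 0)
    (hBC : ∀ t ∈ Set.Icc (0 : ℝ) T, vE xL t = 0 ∧ vE xR t = 0)
    (cinf : ℝ)
    (hcinf : cinf = sSup ((fun x => (Real.sqrt (ε x * μ x))⁻¹) '' Set.Ioo xL xR)) :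
    ∀ t ∈ Set.Icc (0 : ℝ) T,
      (∫ s in (0 : ℝ)..t, ∫ x in xL..xR, (ε x * (vE x s) ^ 2 + μ x * (vH x s) ^ 2))
        ≤ t ^ 2 * cinf ^ 2 *
          ∫ s in (0 : ℝ)..t, ∫ x in xL..xR, (ε x * (φ x s) ^ 2 + μ x * (ψ x s) ^ 2) :=
  stmt10_general xL xR T εstar μstar hx ε μ hεcont hμcont hεstar hμstar hε hμ φ ψ vE vH hφ hψ hvE
    hvH hPDE1 hPDE2 hIC hBC cinf hcinf
end

section
/- Let c>0, T>0, and let f be continuous on ℝ×[0,T]. Define u(x,t) := ∫_0^t c · f( x + c(s−t), s ) ds for (x,t)∈ℝ×[0,T]. Then for every t∈[0,T] and every interval (x_L,x_R), ∫_{x_L}^{x_R} u(x,t)² dx ≤ t c² ∫_0^t ∫_{x_L+c(s−t)}^{x_R+c(s−t)} f(y,s)² dy ds. -/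
/-!
By Cauchy–Schwarz along the characteristic through `(x, t)` (Jensen for `x ↦ x ^ 2` on `[0, t]`),
`u(x, t)² ≤ t c² ∫₀ᵗ f(x + c(s - t), s)² ds`. Integrating in `x`, swapping the order of
integration and substituting `y = x + c(s - t)` gives the integral over the backward
parallelogram. To have joint continuity in the plane, `f` is first clamped in time to `[0, T]`.
-/

open MeasureTheory Set

theorem sq_intervalIntegral_le_mul_intervalIntegral_sq {h : ℝ → ℝ} {a b : ℝ} (hab : a ≤ b)
    (hh : IntervalIntegrable h volume a b)
    (hh2 : IntervalIntegrable (fun s => h s ^ 2) volume a b) :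
    (∫ s in a..b, h s) ^ 2 ≤ (b - a) * ∫ s in a..b, h s ^ 2 := by
  rcases hab.eq_or_lt with rfl | hlt
  · simp
  have jensen := (Even.convexOn_pow (n := 2) even_two).map_set_average_le
    (continuous_pow 2).continuousOn isClosed_univ (μ := volume) (t := uIoc a b)
    (by simp [uIoc_of_le hab, hlt]) (by simp [uIoc_of_le hab]) (by simp) hh.def' hh2.def'
  rw [interval_average_eq, interval_average_eq, smul_eq_mul, smul_eq_mul] at jensen
  have hpos : 0 < b - a := sub_pos.2 hlt
  rw [mul_pow, inv_pow, inv_mul_le_iff₀ (by positivity)] at jensen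
  calc (∫ s in a..b, h s) ^ 2 ≤ (b - a) ^ 2 * ((b - a)⁻¹ * ∫ s in a..b, h s ^ 2) := jensen
    _ = (b - a) * ∫ s in a..b, h s ^ 2 := by field_simp

theorem ContinuousOn.exists_continuous_eqOn_univ_prod_Icc {X E : Type*} [TopologicalSpace X]
    [TopologicalSpace E] {g : X × ℝ → E} {a b : ℝ} (hab : a ≤ b)
    (hg : ContinuousOn g (univ ×ˢ Icc a b)) :
    ∃ G : X × ℝ → E, Continuous G ∧ EqOn G g (univ ×ˢ Icc a b) :=
  ⟨fun p => g (p.1, projIcc a b hab p.2),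
    hg.comp_continuous (continuous_fst.prodMk (continuous_subtype_val.comp (continuous_projIcc.comp continuous_snd)))
      fun _ => ⟨mem_univ _, Subtype.mem _⟩,
    fun p hp => by simp [projIcc_of_mem hab hp.2]⟩

theorem intervalIntegral_sq_intervalIntegral_comp_add_le {F : ℝ → ℝ → ℝ}
    (hF : Continuous fun p : ℝ × ℝ => F p.1 p.2) {φ : ℝ → ℝ} (hφ : Continuous φ)
    {a b xL xR : ℝ} (hab : a ≤ b) (hx : xL ≤ xR) :
    (∫ x in xL..xR, (∫ s in a..b, F (x + φ s) s) ^ 2)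
      ≤ (b - a) * ∫ s in a..b, ∫ y in (xL + φ s)..(xR + φ s), F y s ^ 2 := by
  set H : ℝ → ℝ → ℝ := fun x s => F (x + φ s) s
  have hH : Continuous fun p : ℝ × ℝ => H p.1 p.2 :=
    hF.comp ((continuous_fst.add (hφ.comp continuous_snd)).prodMk continuous_snd)
  have hH2 : Continuous fun p : ℝ × ℝ => H p.1 p.2 ^ 2 := hH.pow 2
  have hHs : ∀ x, Continuous (H x) := fun x => hH.comp (continuous_const.prodMk continuous_id)
  calc (∫ x in xL..xR, (∫ s in a..b, H x s) ^ 2)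
      ≤ ∫ x in xL..xR, (b - a) * ∫ s in a..b, H x s ^ 2 := by
        refine intervalIntegral.integral_mono_on hx ?_ ?_ fun x _ =>
          sq_intervalIntegral_le_mul_intervalIntegral_sq hab ((hHs x).intervalIntegrable a b)
            (((hHs x).pow 2).intervalIntegrable a b)
        · exact ((intervalIntegral.continuous_parametric_intervalIntegral_of_continuous'
            hH a b).pow 2).intervalIntegrable _ _
        · exact (continuous_const.mul (intervalIntegral.continuous_parametric_intervalIntegral_of_continuous'
            hH2 a b)).intervalIntegrable _ _
    _ = (b - a) * ∫ s in a..b, ∫ x in xL..xR, H x s ^ 2 := by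
        rw [intervalIntegral.integral_const_mul, intervalIntegral_intervalIntegral_swap]
        exact (hH2.continuousOn.integrableOn_compact (isCompact_uIcc.prod isCompact_uIcc)).mono_set
          (prod_mono uIoc_subset_uIcc uIoc_subset_uIcc)
    _ = (b - a) * ∫ s in a..b, ∫ y in (xL + φ s)..(xR + φ s), F y s ^ 2 := by
        congr 1
        exact intervalIntegral.integral_congr fun s _ =>
          intervalIntegral.integral_comp_add_right (fun y => F y s ^ 2) (φ s)

theorem stmt12_general (c T : ℝ)
    (f : ℝ → ℝ → ℝ)
    (hf : ContinuousOn (fun p : ℝ × ℝ => f p.1 p.2) (Set.univ ×ˢ Set.Icc 0 T))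
    (u : ℝ → ℝ → ℝ)
    (hu : u = fun x t => ∫ s in (0 : ℝ)..t, c * f (x + c * (s - t)) s) :
    ∀ t ∈ Set.Icc (0 : ℝ) T, ∀ xL xR : ℝ, xL ≤ xR →
      (∫ x in xL..xR, (u x t) ^ 2)
        ≤ t * c ^ 2 * ∫ s in (0 : ℝ)..t,
            ∫ y in (xL + c * (s - t))..(xR + c * (s - t)), (f y s) ^ 2 := by
  rintro t ⟨ht0, htT⟩ xL xR hx
  obtain ⟨G, hG, hGf⟩ := hf.exists_continuous_eqOn_univ_prod_Icc (ht0.trans htT)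
  have hGf' : ∀ y, ∀ s ∈ uIcc 0 t, G (y, s) = f y s := fun y s hs =>
    hGf ⟨mem_univ y, Icc_subset_Icc_right htT (uIcc_of_le ht0 ▸ hs)⟩
  have hu' : ∀ x, u x t = ∫ s in (0 : ℝ)..t, c * G (x + c * (s - t), s) := fun x => by
    rw [hu]
    exact intervalIntegral.integral_congr fun s hs => by rw [hGf' _ s hs]
  have bound := intervalIntegral_sq_intervalIntegral_comp_add_le (F := fun y s => c * G (y, s))
    (continuous_const.mul hG) (φ := fun s => c * (s - t)) (by fun_prop) ht0 hx
  calc (∫ x in xL..xR, (u x t) ^ 2)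
      ≤ (t - 0) * ∫ s in (0 : ℝ)..t,
          ∫ y in (xL + c * (s - t))..(xR + c * (s - t)), (c * G (y, s)) ^ 2 := by
        simpa only [hu'] using bound
    _ = t * c ^ 2 * ∫ s in (0 : ℝ)..t,
          ∫ y in (xL + c * (s - t))..(xR + c * (s - t)), (f y s) ^ 2 := by
        simp_rw [mul_pow, intervalIntegral.integral_const_mul, sub_zero, mul_assoc]
        congr 2
        exact intervalIntegral.integral_congr fun s hs =>
          intervalIntegral.integral_congr fun y _ => by rw [hGf' y s hs]

theorem stmt12 (c T : ℝ) (hc : 0 < c) (hT : 0 < T)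
    (f : ℝ → ℝ → ℝ)
    (hf : ContinuousOn (fun p : ℝ × ℝ => f p.1 p.2) (Set.univ ×ˢ Set.Icc 0 T))
    (u : ℝ → ℝ → ℝ)
    (hu : u = fun x t => ∫ s in (0 : ℝ)..t, c * f (x + c * (s - t)) s) :
    ∀ t ∈ Set.Icc (0 : ℝ) T, ∀ xL xR : ℝ, xL ≤ xR →
      (∫ x in xL..xR, (u x t) ^ 2)
        ≤ t * c ^ 2 * ∫ s in (0 : ℝ)..t,
            ∫ y in (xL + c * (s - t))..(xR + c * (s - t)), (f y s) ^ 2 :=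
  stmt12_general c T f hf u hu
end

section
/- Let D=(x₀,x₁)×(t₀,t₁)⊂ℝ² be a space–time rectangle and c>0, and set Ω_D⁻=(x₀−ct₁, x₁−ct₀). Then there is no constant C>0 such that ‖u₀‖_{L²(Ω_D⁻)} ≤ C ‖u‖_{L²(D)} holds for all u₀ ∈ L²(Ω_D⁻), where u(x,t) := u₀(x−ct) on D. In particular, for each sufficiently large ℓ∈ℕ the function u_{0,ℓ}(z) := √ℓ · χ_{(x₀−ct₁, x₀−ct₁+1/ℓ)}(z) satisfies ‖u_{0,ℓ}‖_{L²(Ω_D⁻)} = 1 while ‖u_ℓ‖_{L²(D)} = (2cℓ)^{−1/2} for u_ℓ(x,t) := u_{0,ℓ}(x−ct). -/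
/-! For `u₀ = √ℓ · χ_(a, a + 1/ℓ)` with `a = x₀ - c t₁` the left end of `Ω_D⁻`, the wave
`u₀(x - ct)` meets `D` only in a thin triangle at the corner `(x₀, t₁)`: substituting
`z = x - ct` in the time integral, `∫ u(x, t)² dt = (ℓ / c) (x₀ + 1/ℓ - x)⁺`, whose integral over
`x` is `1 / (2cℓ)`. So `‖u₀‖ = 1` while `‖u‖ → 0` as `ℓ → ∞`, and no constant `C` can work. -/

open MeasureTheory Set

lemma sq_indicator_const {α : Type*} (s : Set α) (r : ℝ) (z : α) :
    (s.indicator (fun _ => r) z) ^ 2 = s.indicator (fun _ => r ^ 2) z := by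
  by_cases h : z ∈ s <;> simp [h]

lemma setIntegral_Ioo_indicator_Ioo_const {a b d : ℝ} (had : a ≤ d) (hdb : d ≤ b) (k : ℝ) :
    ∫ z in Ioo a b, (Ioo a d).indicator (fun _ => k) z = k * (d - a) := by
  rw [setIntegral_indicator measurableSet_Ioo, Ioo_inter_Ioo, max_self, min_eq_right hdb,
    setIntegral_const, Real.volume_real_Ioo_of_le had, smul_eq_mul, mul_comm]

lemma intervalIntegral_indicator_Ioo_const {a b u v : ℝ} (hau : a ≤ u) (hbv : b ≤ v)
    (huv : u ≤ v) (k : ℝ) :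
    ∫ z in u..v, (Ioo a b).indicator (fun _ => k) z = k * max (b - u) 0 := by
  rw [intervalIntegral.integral_of_le huv, setIntegral_indicator measurableSet_Ioo,
    Ioc_inter_Ioo_of_right_le hbv, max_eq_left hau, setIntegral_const, Real.volume_real_Ioo,
    smul_eq_mul, mul_comm]

lemma intervalIntegral_sq_indicator_comp_sub_mul {x₀ x t₀ t₁ c ε : ℝ} (hc : 0 < c)
    (hx : x₀ ≤ x) (ht : t₀ ≤ t₁) (hε : ε ≤ c * (t₁ - t₀)) (r : ℝ) :
    ∫ t in t₀..t₁, ((Ioo (x₀ - c * t₁) (x₀ - c * t₁ + ε)).indicator (fun _ => r) (x - c * t)) ^ 2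
      = r ^ 2 / c * max (x₀ + ε - x) 0 := by
  have hct : c * t₀ ≤ c * t₁ := mul_le_mul_of_nonneg_left ht hc.le
  simp_rw [sq_indicator_const]
  rw [intervalIntegral.integral_comp_sub_mul _ hc.ne',
    intervalIntegral_indicator_Ioo_const (by linarith) (by linarith) (by linarith), smul_eq_mul,
    show x₀ - c * t₁ + ε - (x - c * t₁) = x₀ + ε - x by ring, div_eq_inv_mul, mul_assoc]

lemma intervalIntegral_max_sub_zero {x₀ x₁ ε : ℝ} (hε : 0 ≤ ε) (hεx : ε ≤ x₁ - x₀) :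
    ∫ x in x₀..x₁, max (x₀ + ε - x) 0 = ε ^ 2 / 2 := by
  have hint : ∀ u v, IntervalIntegrable (fun x => max (x₀ + ε - x) 0) volume u v := fun u v =>
    ((continuous_const.sub continuous_id).max continuous_const).intervalIntegrable u v
  have hramp : ∫ x in x₀..x₀ + ε, max (x₀ + ε - x) 0 = ε ^ 2 / 2 := by
    rw [intervalIntegral.integral_congr (g := fun x => x₀ + ε - x) fun x hx =>
        max_eq_left (by rw [uIcc_of_le (by linarith)] at hx; linarith [hx.2]),
      intervalIntegral.integral_comp_sub_left (fun x => x), integral_id]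
    ring
  have hzero : ∫ x in x₀ + ε..x₁, max (x₀ + ε - x) 0 = 0 := by
    rw [intervalIntegral.integral_congr (g := fun _ => 0) fun x hx =>
        max_eq_right (by rw [uIcc_of_le (by linarith)] at hx; linarith [hx.1]),
      intervalIntegral.integral_zero]
  rw [← intervalIntegral.integral_add_adjacent_intervals (hint x₀ (x₀ + ε)) (hint _ x₁),
    hramp, hzero, add_zero]

lemma integral_sq_indicator_travelingWave {x₀ x₁ t₀ t₁ c ε : ℝ} (hc : 0 < c) (hε : 0 ≤ ε)
    (hεx : ε ≤ x₁ - x₀) (hεt : ε ≤ c * (t₁ - t₀)) (r : ℝ) :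
    ∫ x in x₀..x₁, ∫ t in t₀..t₁,
        ((Ioo (x₀ - c * t₁) (x₀ - c * t₁ + ε)).indicator (fun _ => r) (x - c * t)) ^ 2
      = r ^ 2 * ε ^ 2 / (2 * c) := by
  have ht : t₀ ≤ t₁ := sub_nonneg.1 ((mul_nonneg_iff_of_pos_left hc).1 (hε.trans hεt))
  rw [intervalIntegral.integral_congr (g := fun x => r ^ 2 / c * max (x₀ + ε - x) 0)
      fun x hx => intervalIntegral_sq_indicator_comp_sub_mul hc
        (by rw [uIcc_of_le (by linarith)] at hx; exact hx.1) ht hεt r,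
    intervalIntegral.integral_const_mul, intervalIntegral_max_sub_zero hε hεx]
  field_simp

section Bump

variable {x₀ x₁ t₀ t₁ c : ℝ} {ℓ : ℕ}

lemma sqrt_integral_sq_bump (hℓ : 0 < ℓ)
    (hε : (1 : ℝ) / ℓ ≤ min (x₁ - x₀) (c * (t₁ - t₀))) :
    Real.sqrt (∫ z in Ioo (x₀ - c * t₁) (x₁ - c * t₀),
      ((Ioo (x₀ - c * t₁) (x₀ - c * t₁ + 1 / ℓ)).indicator (fun _ => Real.sqrt ℓ) z) ^ 2) = 1 := by
  have hℓR : (0 : ℝ) < ℓ := Nat.cast_pos.2 hℓ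
  obtain ⟨hεx, hεt⟩ := le_min_iff.1 hε
  simp_rw [sq_indicator_const]
  rw [setIntegral_Ioo_indicator_Ioo_const (le_add_of_nonneg_right (by positivity))
      (by linarith [mul_sub c t₁ t₀, one_div_pos.2 hℓR]), Real.sq_sqrt hℓR.le,
    add_sub_cancel_left, mul_one_div_cancel hℓR.ne', Real.sqrt_one]

lemma sqrt_integral_sq_bump_travelingWave (hc : 0 < c) (hℓ : 0 < ℓ)
    (hε : (1 : ℝ) / ℓ ≤ min (x₁ - x₀) (c * (t₁ - t₀))) :
    Real.sqrt (∫ x in x₀..x₁, ∫ t in t₀..t₁,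
      ((Ioo (x₀ - c * t₁) (x₀ - c * t₁ + 1 / ℓ)).indicator (fun _ => Real.sqrt ℓ) (x - c * t)) ^ 2)
      = (2 * c * ℓ) ^ (-(1 / 2) : ℝ) := by
  have hℓR : (0 : ℝ) < ℓ := Nat.cast_pos.2 hℓ
  obtain ⟨hεx, hεt⟩ := le_min_iff.1 hε
  rw [integral_sq_indicator_travelingWave hc (by positivity) hεx hεt, Real.sq_sqrt hℓR.le,
    show (ℓ : ℝ) * (1 / ℓ) ^ 2 / (2 * c) = (2 * c * ℓ)⁻¹ by field_simp,
    Real.sqrt_inv, Real.sqrt_eq_rpow, ← Real.rpow_neg (by positivity)]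

end Bump

lemma mul_rpow_neg_half_lt_one {C y : ℝ} (hC : 0 ≤ C) (h : C ^ 2 < y) :
    C * y ^ (-(1 / 2) : ℝ) < 1 := by
  have hy : 0 < y := (sq_nonneg C).trans_lt h
  rw [Real.rpow_neg hy.le, ← Real.sqrt_eq_rpow, ← div_eq_mul_inv, div_lt_one (Real.sqrt_pos.2 hy)]
  exact (Real.lt_sqrt hC).2 h

theorem stmt14 (x₀ x₁ t₀ t₁ c : ℝ) (hx : x₀ < x₁) (ht : t₀ < t₁) (hc : 0 < c) :
    (¬ ∃ C : ℝ, 0 < C ∧ ∀ u₀ : ℝ → ℝ,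
        Real.sqrt (∫ z in Set.Ioo (x₀ - c * t₁) (x₁ - c * t₀), (u₀ z) ^ 2)
          ≤ C * Real.sqrt (∫ x in x₀..x₁, ∫ t in t₀..t₁, (u₀ (x - c * t)) ^ 2)) ∧
    (∀ ℓ : ℕ, 0 < ℓ → (1 : ℝ) / ℓ ≤ min (x₁ - x₀) (c * (t₁ - t₀)) →
      (Real.sqrt (∫ z in Set.Ioo (x₀ - c * t₁) (x₁ - c * t₀),
          ((Set.Ioo (x₀ - c * t₁) (x₀ - c * t₁ + 1 / ℓ)).indicator
            (fun _ => Real.sqrt ℓ) z) ^ 2) = 1 ∧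
        Real.sqrt (∫ x in x₀..x₁, ∫ t in t₀..t₁,
          ((Set.Ioo (x₀ - c * t₁) (x₀ - c * t₁ + 1 / ℓ)).indicator
            (fun _ => Real.sqrt ℓ) (x - c * t)) ^ 2)
          = (2 * c * ℓ) ^ (-(1 / 2) : ℝ))) := by
  refine ⟨?_, fun ℓ hℓ hε =>
    ⟨sqrt_integral_sq_bump hℓ hε, sqrt_integral_sq_bump_travelingWave hc hℓ hε⟩⟩
  rintro ⟨C, hC, hall⟩
  have hm : 0 < min (x₁ - x₀) (c * (t₁ - t₀)) := lt_min (sub_pos.2 hx) (mul_pos hc (sub_pos.2 ht))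
  obtain ⟨ℓ, hℓ⟩ := exists_nat_gt (max (C ^ 2 / (2 * c)) (1 / min (x₁ - x₀) (c * (t₁ - t₀))))
  have hℓR : (0 : ℝ) < ℓ := (one_div_pos.2 hm).trans (le_max_right _ _ |>.trans_lt hℓ)
  have hε := (one_div_le hℓR hm).2 ((le_max_right _ _).trans hℓ.le)
  have hC2 : C ^ 2 < 2 * c * ℓ := by
    have := (div_lt_iff₀ (by positivity)).1 ((le_max_left _ _).trans_lt hℓ)
    linarith
  have key := hall ((Ioo (x₀ - c * t₁) (x₀ - c * t₁ + 1 / ℓ)).indicator fun _ => Real.sqrt ℓ)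
  rw [sqrt_integral_sq_bump (Nat.cast_pos.1 hℓR) hε,
    sqrt_integral_sq_bump_travelingWave hc (Nat.cast_pos.1 hℓR) hε] at key
  exact (mul_rpow_neg_half_lt_one hC.le hC2).not_ge key
end

section
/- Let D=(x₀,x₁)×(t₀,t₁)⊂ℝ² be a space–time rectangle, ε, μ > 0 constants, c := (εμ)^{−1/2}, j∈ℕ, and p∈ℕ. Let u₀ ∈ C^j on the closure of Ω_D⁻=(x₀−ct₁, x₁−ct₀) and w₀ ∈ C^j on the closure of Ω_D⁺=(x₀+ct₀, x₁+ct₁), and define E(x,t) := (u₀(x−ct)+w₀(x+ct))/(2ε^{1/2}) and H(x,t) := (u₀(x−ct)−w₀(x+ct))/(2μ^{1/2}) on D. Let Φ⁻={φ₀⁻,…,φ_p⁻} and Φ⁺={φ₀⁺,…,φ_p⁺} be sets of p+1 functions of class C^j on the closures of Ω_D⁻ and Ω_D⁺ respectively, and let V_p(D) be the linear span of the pairs (φ_k⁻(x−ct)/(2ε^{1/2}), φ_k⁻(x−ct)/(2μ^{1/2})) and (φ_k⁺(x+ct)/(2ε^{1/2}), −φ_k⁺(x+ct)/(2μ^{1/2})),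 k=0,…,p. Then inf_{(v_E,v_H)∈V_p(D)} ( |ε^{1/2}(E−v_E)|_{W^{j,∞}_c(D)} + |μ^{1/2}(H−v_H)|_{W^{j,∞}_c(D)} ) ≤ inf_{P ∈ span Φ⁻} |u₀−P|_{W^{j,∞}(Ω_D⁻)} + inf_{P ∈ span Φ⁺} |w₀−P|_{W^{j,∞}(Ω_D⁺)}. -/
/-
Given `P₁ ∈ span Φ⁻` and `P₂ ∈ span Φ⁺`, the discrete field built from `P₁(x - ct)` and
`P₂(x + ct)` lies in `V_p(D)`, and its weighted errors are `½ f(x - ct) ± ½ g(x + ct)` with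
`f = u₀ - P₁`, `g = w₀ - P₂`. By the chain rule, `∂ₓ^{α_x} ∂ₜ^{α_t}` of such a superposition is
`(-c)^{α_t} ½ f⁽ʲ⁾(x - ct) ± c^{α_t} ½ g⁽ʲ⁾(x + ct)`, so the weight `c^{-α_t}` of `D_c^α` exactly
cancels the speed and each error seminorm is at most `½ (|f|_{W^{j,∞}} + |g|_{W^{j,∞}})`.
Taking infima over `P₁` and `P₂` gives the estimate.
-/

open MeasureTheory Set

open Filter Topology

theorem ContDiffOn.hasDerivAt_iteratedDeriv {𝕜 F : Type*} [NontriviallyNormedField 𝕜]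
    [NormedAddCommGroup F] [NormedSpace 𝕜 F] {f : 𝕜 → F} {s : Set 𝕜} {n k : ℕ} {z : 𝕜}
    (hf : ContDiffOn 𝕜 n f s) (hs : IsOpen s) (hk : k < n) (hz : z ∈ s) :
    HasDerivAt (iteratedDeriv k f) (iteratedDeriv (k + 1) f z) z := by
  have hd : DifferentiableOn 𝕜 (iteratedDeriv k f) s :=
    (hf.differentiableOn_iteratedDerivWithin (by exact_mod_cast hk) hs.uniqueDiffOn).congr
      fun y hy => (iteratedDerivWithin_of_isOpen hs hy).symm
  rw [iteratedDeriv_succ]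
  exact (hd.differentiableAt (hs.mem_nhds hz)).hasDerivAt

theorem ContDiffOn.of_mem_span {𝕜 E F ι : Type*} [NontriviallyNormedField 𝕜]
    [NormedAddCommGroup E] [NormedSpace 𝕜 E] [NormedAddCommGroup F] [NormedSpace 𝕜 F]
    {n : WithTop ℕ∞} {s : Set E} {φ : ι → E → F} (hφ : ∀ i, ContDiffOn 𝕜 n (φ i) s)
    {P : E → F} (hP : P ∈ Submodule.span 𝕜 (Set.range φ)) : ContDiffOn 𝕜 n P s := by
  induction hP using Submodule.span_induction with
  | mem _ h => obtain ⟨i, rfl⟩ := h; exact hφ i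
  | zero => exact contDiffOn_const
  | add _ _ _ _ hx hy => exact hx.add hy
  | smul r _ _ hx => exact hx.const_smul r

section Waves

variable {f g : ℝ → ℝ} {O₁ O₂ : Set ℝ} {j k m : ℕ} {α β s₁ s₂ x t : ℝ}

/-- The value of `∂ₓ^(m-k) ∂ₜ^k (α f(x + s₁t) + β g(x + s₂t))`, by
`iterate_pdX_iterate_pdT_waveDeriv`. -/
noncomputable def waveDeriv (f g : ℝ → ℝ) (α β s₁ s₂ : ℝ) (k m : ℕ) : ℝ → ℝ → ℝ :=
  fun x t => α * s₁ ^ k * iteratedDeriv m f (x + s₁ * t)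
    + β * s₂ ^ k * iteratedDeriv m g (x + s₂ * t)

lemma pdT_waveDeriv (hf : ContDiffOn ℝ j f O₁) (hO₁ : IsOpen O₁) (hg : ContDiffOn ℝ j g O₂)
    (hO₂ : IsOpen O₂) (hm : m < j) (h₁ : x + s₁ * t ∈ O₁) (h₂ : x + s₂ * t ∈ O₂) :
    pdT (waveDeriv f g α β s₁ s₂ k m) x t = waveDeriv f g α β s₁ s₂ (k + 1) (m + 1) x t := by
  have hline (s : ℝ) : HasDerivAt (fun τ : ℝ => x + s * τ) s t := by
    simpa using ((hasDerivAt_id t).const_mul s).const_add x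
  have hF := (hf.hasDerivAt_iteratedDeriv hO₁ hm h₁).comp t (hline s₁)
  have hG := (hg.hasDerivAt_iteratedDeriv hO₂ hm h₂).comp t (hline s₂)
  have hW : HasDerivAt (fun τ => waveDeriv f g α β s₁ s₂ k m x τ)
      (α * s₁ ^ k * (iteratedDeriv (m + 1) f (x + s₁ * t) * s₁)
        + β * s₂ ^ k * (iteratedDeriv (m + 1) g (x + s₂ * t) * s₂)) t :=
    (hF.const_mul _).add (hG.const_mul _)
  rw [pdT, hW.deriv, waveDeriv]
  ring

lemma pdX_waveDeriv (hf : ContDiffOn ℝ j f O₁) (hO₁ : IsOpen O₁) (hg : ContDiffOn ℝ j g O₂)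
    (hO₂ : IsOpen O₂) (hm : m < j) (h₁ : x + s₁ * t ∈ O₁) (h₂ : x + s₂ * t ∈ O₂) :
    pdX (waveDeriv f g α β s₁ s₂ k m) x t = waveDeriv f g α β s₁ s₂ k (m + 1) x t := by
  have hline (s : ℝ) : HasDerivAt (fun y : ℝ => y + s * t) 1 x := (hasDerivAt_id x).add_const _
  have hF := (hf.hasDerivAt_iteratedDeriv hO₁ hm h₁).comp x (hline s₁)
  have hG := (hg.hasDerivAt_iteratedDeriv hO₂ hm h₂).comp x (hline s₂)
  have hW : HasDerivAt (fun y => waveDeriv f g α β s₁ s₂ k m y t)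
      (α * s₁ ^ k * (iteratedDeriv (m + 1) f (x + s₁ * t) * 1)
        + β * s₂ ^ k * (iteratedDeriv (m + 1) g (x + s₂ * t) * 1)) x :=
    (hF.const_mul _).add (hG.const_mul _)
  rw [pdX, hW.deriv, waveDeriv]
  ring

lemma iterate_pdT_waveDeriv (hf : ContDiffOn ℝ j f O₁) (hO₁ : IsOpen O₁)
    (hg : ContDiffOn ℝ j g O₂) (hO₂ : IsOpen O₂) (hk : k ≤ j)
    (h₁ : x + s₁ * t ∈ O₁) (h₂ : x + s₂ * t ∈ O₂) :
    pdT^[k] (waveDeriv f g α β s₁ s₂ 0 0) x t = waveDeriv f g α β s₁ s₂ k k x t := by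
  induction k generalizing t with
  | zero => rfl
  | succ k ih =>
    have hline (s : ℝ) : Continuous fun τ : ℝ => x + s * τ := by fun_prop
    have hnear : (fun τ => pdT^[k] (waveDeriv f g α β s₁ s₂ 0 0) x τ)
        =ᶠ[𝓝 t] fun τ => waveDeriv f g α β s₁ s₂ k k x τ := by
      filter_upwards [(hline s₁).continuousAt.eventually_mem (hO₁.mem_nhds h₁),
        (hline s₂).continuousAt.eventually_mem (hO₂.mem_nhds h₂)] with τ hτ₁ hτ₂
      exact ih (by omega) hτ₁ hτ₂
    rw [Function.iterate_succ_apply', pdT, hnear.deriv_eq]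
    exact pdT_waveDeriv hf hO₁ hg hO₂ (by omega) h₁ h₂

lemma iterate_pdX_iterate_pdT_waveDeriv (hf : ContDiffOn ℝ j f O₁) (hO₁ : IsOpen O₁)
    (hg : ContDiffOn ℝ j g O₂) (hO₂ : IsOpen O₂) (hmk : m + k ≤ j)
    (h₁ : x + s₁ * t ∈ O₁) (h₂ : x + s₂ * t ∈ O₂) :
    pdX^[m] (pdT^[k] (waveDeriv f g α β s₁ s₂ 0 0)) x t
      = waveDeriv f g α β s₁ s₂ k (m + k) x t := by
  induction m generalizing x with
  | zero => simpa using iterate_pdT_waveDeriv hf hO₁ hg hO₂ (by omega) h₁ h₂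
  | succ m ih =>
    have hline (s : ℝ) : Continuous fun y : ℝ => y + s * t := by fun_prop
    have hnear : (fun y => pdX^[m] (pdT^[k] (waveDeriv f g α β s₁ s₂ 0 0)) y t)
        =ᶠ[𝓝 x] fun y => waveDeriv f g α β s₁ s₂ k (m + k) y t := by
      filter_upwards [(hline s₁).continuousAt.eventually_mem (hO₁.mem_nhds h₁),
        (hline s₂).continuousAt.eventually_mem (hO₂.mem_nhds h₂)] with y hy₁ hy₂
      exact ih (by omega) hy₁ hy₂
    rw [Function.iterate_succ_apply', pdX, hnear.deriv_eq, Nat.add_right_comm]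
    exact pdX_waveDeriv hf hO₁ hg hO₂ (by omega) h₁ h₂

lemma Dc_travelingWaves {c : ℝ} {ax at' : ℕ} (hc : c ≠ 0) (hf : ContDiffOn ℝ j f O₁)
    (hO₁ : IsOpen O₁) (hg : ContDiffOn ℝ j g O₂) (hO₂ : IsOpen O₂) (hj : ax + at' = j)
    (h₁ : x - c * t ∈ O₁) (h₂ : x + c * t ∈ O₂) :
    Dc c ax at' (fun x t => α * f (x - c * t) + β * g (x + c * t)) x t
      = α * (-1) ^ at' * iteratedDeriv j f (x - c * t) + β * iteratedDeriv j g (x + c * t) := by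
  have hW : (fun x t => α * f (x - c * t) + β * g (x + c * t)) = waveDeriv f g α β (-c) c 0 0 := by
    funext x t
    simp [waveDeriv, sub_eq_add_neg]
  rw [sub_eq_add_neg, ← neg_mul] at h₁ ⊢
  rw [hW, Dc, iterate_pdX_iterate_pdT_waveDeriv hf hO₁ hg hO₂ hj.le h₁ h₂, waveDeriv, hj,
    neg_pow]
  field_simp

end Waves

lemma Winf1_nonneg (j : ℕ) (f : ℝ → ℝ) (a b : ℝ) : 0 ≤ Winf1 j f a b :=
  Real.sSup_nonneg (by rintro _ ⟨z, _, rfl⟩; positivity)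

lemma abs_iteratedDeriv_le_Winf1 {j : ℕ} {f : ℝ → ℝ} {a b z : ℝ}
    (hf : ContDiffOn ℝ j f (Icc a b)) (hz : z ∈ Ioo a b) :
    |iteratedDeriv j f z| ≤ Winf1 j f a b := by
  have hab : a < b := hz.1.trans hz.2
  have hcont : ContinuousOn (fun y => |iteratedDerivWithin j f (Icc a b) y|) (Icc a b) :=
    (hf.continuousOn_iteratedDerivWithin le_rfl (uniqueDiffOn_Icc hab)).abs
  refine le_csSup ((isCompact_Icc.image_of_continuousOn hcont).bddAbove.mono ?_) ⟨z, hz, rfl⟩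
  rintro _ ⟨y, hy, rfl⟩
  refine ⟨y, Ioo_subset_Icc_self hy, ?_⟩
  dsimp only
  rw [iteratedDerivWithin_eq_iteratedDeriv (uniqueDiffOn_Icc hab)
    (hf.contDiffAt (Icc_mem_nhds hy.1 hy.2)) (Ioo_subset_Icc_self hy)]

lemma WinfC_nonneg (c : ℝ) (j : ℕ) (v : ℝ → ℝ → ℝ) (x₀ x₁ t₀ t₁ : ℝ) :
    0 ≤ WinfC c j v x₀ x₁ t₀ t₁ :=
  Real.sSup_nonneg (by rintro _ ⟨_, _, _, _, _, _, _, rfl⟩; positivity)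

lemma WinfC_travelingWaves_le {x₀ x₁ t₀ t₁ c α β : ℝ} {j : ℕ} {f g : ℝ → ℝ} (hc : 0 < c)
    (hf : ContDiffOn ℝ j f (Icc (x₀ - c * t₁) (x₁ - c * t₀)))
    (hg : ContDiffOn ℝ j g (Icc (x₀ + c * t₀) (x₁ + c * t₁))) :
    WinfC c j (fun x t => α * f (x - c * t) + β * g (x + c * t)) x₀ x₁ t₀ t₁
      ≤ |α| * Winf1 j f (x₀ - c * t₁) (x₁ - c * t₀)
        + |β| * Winf1 j g (x₀ + c * t₀) (x₁ + c * t₁) := by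
  refine Real.sSup_le ?_ (add_nonneg
    (mul_nonneg (abs_nonneg α) (Winf1_nonneg ..)) (mul_nonneg (abs_nonneg β) (Winf1_nonneg ..)))
  rintro _ ⟨ax, at', hj, x, ⟨hx₀, hx₁⟩, t, ⟨ht₀, ht₁⟩, rfl⟩
  have h₁ : x - c * t ∈ Ioo (x₀ - c * t₁) (x₁ - c * t₀) := by constructor <;> nlinarith
  have h₂ : x + c * t ∈ Ioo (x₀ + c * t₀) (x₁ + c * t₁) := by constructor <;> nlinarith
  rw [Dc_travelingWaves hc.ne' (hf.mono Ioo_subset_Icc_self) isOpen_Ioo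
    (hg.mono Ioo_subset_Icc_self) isOpen_Ioo hj h₁ h₂]
  calc _ ≤ |α * (-1) ^ at' * iteratedDeriv j f (x - c * t)|
        + |β * iteratedDeriv j g (x + c * t)| := abs_add_le _ _
    _ = |α| * |iteratedDeriv j f (x - c * t)| + |β| * |iteratedDeriv j g (x + c * t)| := by
        simp [abs_mul]
    _ ≤ _ := by
        gcongr
        exacts [abs_iteratedDeriv_le_Winf1 hf h₁, abs_iteratedDeriv_le_Winf1 hg h₂]

theorem le_csInf_add_csInf {α : Type*} [ConditionallyCompleteLattice α] [AddCommGroup α]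
    [IsOrderedAddMonoid α] {S T : Set α} {a : α} (hS : S.Nonempty) (hT : T.Nonempty)
    (h : ∀ s ∈ S, ∀ t ∈ T, a ≤ s + t) : a ≤ sInf S + sInf T := by
  have hsub : ∀ s ∈ S, a - s ≤ sInf T := fun s hs =>
    le_csInf hT fun t ht => sub_le_iff_le_add'.2 (h s hs t ht)
  exact sub_le_iff_le_add.1 (le_csInf hS fun s hs => sub_le_comm.1 (hsub s hs))

noncomputable def rightMovingPair (c a b : ℝ) : (ℝ → ℝ) →ₗ[ℝ] (ℝ → ℝ → ℝ) × (ℝ → ℝ → ℝ) where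
  toFun P := (fun x t => P (x - c * t) / a, fun x t => P (x - c * t) / b)
  map_add' P Q := by ext x t <;> simp only [Pi.add_apply, Prod.mk_add_mk] <;> ring
  map_smul' r P := by
    ext x t <;> simp only [Pi.smul_apply, smul_eq_mul, RingHom.id_apply, Prod.smul_mk] <;> ring

noncomputable def leftMovingPair (c a b : ℝ) : (ℝ → ℝ) →ₗ[ℝ] (ℝ → ℝ → ℝ) × (ℝ → ℝ → ℝ) where
  toFun P := (fun x t => P (x + c * t) / a, fun x t => - P (x + c * t) / b)
  map_add' P Q := by ext x t <;> simp only [Pi.add_apply, Prod.mk_add_mk] <;> ring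
  map_smul' r P := by
    ext x t <;> simp only [Pi.smul_apply, smul_eq_mul, RingHom.id_apply, Prod.smul_mk] <;> ring

lemma rightMovingPair_add_leftMovingPair_mem_span {ι : Type*} {c a b : ℝ} {φn φp : ι → ℝ → ℝ}
    {P₁ P₂ : ℝ → ℝ} (hP₁ : P₁ ∈ Submodule.span ℝ (Set.range φn))
    (hP₂ : P₂ ∈ Submodule.span ℝ (Set.range φp)) :
    rightMovingPair c a b P₁ + leftMovingPair c a b P₂ ∈ Submodule.span ℝ
      (Set.range (rightMovingPair c a b ∘ φn) ∪ Set.range (leftMovingPair c a b ∘ φp)) := by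
  rw [Set.range_comp, Set.range_comp]
  exact add_mem
    (Submodule.span_mono subset_union_left (Submodule.apply_mem_span_image_of_mem_span _ hP₁))
    (Submodule.span_mono subset_union_right (Submodule.apply_mem_span_image_of_mem_span _ hP₂))

lemma WinfC_error_add_WinfC_error_le {x₀ x₁ t₀ t₁ c a b : ℝ} {j : ℕ} {u₀ w₀ P₁ P₂ : ℝ → ℝ}
    {v : (ℝ → ℝ → ℝ) × (ℝ → ℝ → ℝ)} (hc : 0 < c) (ha : a ≠ 0) (hb : b ≠ 0)
    (hf : ContDiffOn ℝ j (fun z => u₀ z - P₁ z) (Icc (x₀ - c * t₁) (x₁ - c * t₀)))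
    (hg : ContDiffOn ℝ j (fun z => w₀ z - P₂ z) (Icc (x₀ + c * t₀) (x₁ + c * t₁)))
    (hv : v = rightMovingPair c (2 * a) (2 * b) P₁ + leftMovingPair c (2 * a) (2 * b) P₂) :
    WinfC c j (fun x t => a * ((u₀ (x - c * t) + w₀ (x + c * t)) / (2 * a) - v.1 x t))
        x₀ x₁ t₀ t₁
      + WinfC c j (fun x t => b * ((u₀ (x - c * t) - w₀ (x + c * t)) / (2 * b) - v.2 x t))
        x₀ x₁ t₀ t₁
      ≤ Winf1 j (fun z => u₀ z - P₁ z) (x₀ - c * t₁) (x₁ - c * t₀)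
        + Winf1 j (fun z => w₀ z - P₂ z) (x₀ + c * t₀) (x₁ + c * t₁) := by
  have hE : (fun x t => a * ((u₀ (x - c * t) + w₀ (x + c * t)) / (2 * a) - v.1 x t))
      = fun x t => 2⁻¹ * (u₀ (x - c * t) - P₁ (x - c * t))
        + 2⁻¹ * (w₀ (x + c * t) - P₂ (x + c * t)) := by
    funext x t
    simp only [hv, rightMovingPair, leftMovingPair, LinearMap.coe_mk, AddHom.coe_mk,
      Prod.mk_add_mk, Pi.add_apply]
    field_simp
    ring
  have hH : (fun x t => b * ((u₀ (x - c * t) - w₀ (x + c * t)) / (2 * b) - v.2 x t))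
      = fun x t => 2⁻¹ * (u₀ (x - c * t) - P₁ (x - c * t))
        + -2⁻¹ * (w₀ (x + c * t) - P₂ (x + c * t)) := by
    funext x t
    simp only [hv, rightMovingPair, leftMovingPair, LinearMap.coe_mk, AddHom.coe_mk,
      Prod.mk_add_mk, Pi.add_apply]
    field_simp
    ring
  have hE_le := WinfC_travelingWaves_le (α := 2⁻¹) (β := 2⁻¹) hc hf hg
  have hH_le := WinfC_travelingWaves_le (α := 2⁻¹) (β := -2⁻¹) hc hf hg
  rw [hE, hH]
  refine (add_le_add hE_le hH_le).trans_eq ?_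
  rw [abs_neg, abs_of_pos (by norm_num : (0 : ℝ) < 2⁻¹)]
  ring

theorem stmt15_general (x₀ x₁ t₀ t₁ ε μ c : ℝ)
    (hε : 0 < ε) (hμ : 0 < μ) (hc : c = (Real.sqrt (ε * μ))⁻¹)
    (j p : ℕ) (u₀ w₀ : ℝ → ℝ)
    (hu₀ : ContDiffOn ℝ j u₀ (Set.Icc (x₀ - c * t₁) (x₁ - c * t₀)))
    (hw₀ : ContDiffOn ℝ j w₀ (Set.Icc (x₀ + c * t₀) (x₁ + c * t₁)))
    (φn φp : Fin (p + 1) → ℝ → ℝ)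
    (hφn : ∀ k, ContDiffOn ℝ j (φn k) (Set.Icc (x₀ - c * t₁) (x₁ - c * t₀)))
    (hφp : ∀ k, ContDiffOn ℝ j (φp k) (Set.Icc (x₀ + c * t₀) (x₁ + c * t₁)))
    (E H : ℝ → ℝ → ℝ)
    (hE : E = fun x t => (u₀ (x - c * t) + w₀ (x + c * t)) / (2 * Real.sqrt ε))
    (hH : H = fun x t => (u₀ (x - c * t) - w₀ (x + c * t)) / (2 * Real.sqrt μ))
    (Vp : Submodule ℝ ((ℝ → ℝ → ℝ) × (ℝ → ℝ → ℝ)))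
    (hVp : Vp = Submodule.span ℝ
      (Set.range (fun k : Fin (p + 1) =>
        ((fun x t => φn k (x - c * t) / (2 * Real.sqrt ε)),
         (fun x t => φn k (x - c * t) / (2 * Real.sqrt μ)))) ∪
       Set.range (fun k : Fin (p + 1) =>
        ((fun x t => φp k (x + c * t) / (2 * Real.sqrt ε)),
         (fun x t => - φp k (x + c * t) / (2 * Real.sqrt μ)))))) :
    sInf {r : ℝ | ∃ v ∈ Vp,
        r = WinfC c j (fun x t => Real.sqrt ε * (E x t - v.1 x t)) x₀ x₁ t₀ t₁
          + WinfC c j (fun x t => Real.sqrt μ * (H x t - v.2 x t)) x₀ x₁ t₀ t₁}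
      ≤ sInf {r : ℝ | ∃ P ∈ Submodule.span ℝ (Set.range φn),
            r = Winf1 j (fun z => u₀ z - P z) (x₀ - c * t₁) (x₁ - c * t₀)}
        + sInf {r : ℝ | ∃ P ∈ Submodule.span ℝ (Set.range φp),
            r = Winf1 j (fun z => w₀ z - P z) (x₀ + c * t₀) (x₁ + c * t₁)} := by
  have hc₀ : 0 < c := hc ▸ inv_pos.2 (Real.sqrt_pos.2 (mul_pos hε hμ))
  subst hE hH hVp
  refine le_csInf_add_csInf ⟨_, 0, zero_mem _, rfl⟩ ⟨_, 0, zero_mem _, rfl⟩ ?_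
  rintro _ ⟨P₁, hP₁, rfl⟩ _ ⟨P₂, hP₂, rfl⟩
  refine csInf_le_of_le ⟨0, ?_⟩ ⟨_, rightMovingPair_add_leftMovingPair_mem_span hP₁ hP₂, rfl⟩
    (WinfC_error_add_WinfC_error_le hc₀ (Real.sqrt_pos.2 hε).ne' (Real.sqrt_pos.2 hμ).ne'
      (hu₀.sub (.of_mem_span hφn hP₁)) (hw₀.sub (.of_mem_span hφp hP₂)) rfl)
  rintro _ ⟨v, -, rfl⟩
  exact add_nonneg (WinfC_nonneg ..) (WinfC_nonneg ..)

theorem stmt15 (x₀ x₁ t₀ t₁ ε μ c : ℝ) (hx : x₀ < x₁) (ht : t₀ < t₁)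
    (hε : 0 < ε) (hμ : 0 < μ) (hc : c = (Real.sqrt (ε * μ))⁻¹)
    (j p : ℕ) (u₀ w₀ : ℝ → ℝ)
    (hu₀ : ContDiffOn ℝ j u₀ (Set.Icc (x₀ - c * t₁) (x₁ - c * t₀)))
    (hw₀ : ContDiffOn ℝ j w₀ (Set.Icc (x₀ + c * t₀) (x₁ + c * t₁)))
    (φn φp : Fin (p + 1) → ℝ → ℝ)
    (hφn : ∀ k, ContDiffOn ℝ j (φn k) (Set.Icc (x₀ - c * t₁) (x₁ - c * t₀)))
    (hφp : ∀ k, ContDiffOn ℝ j (φp k) (Set.Icc (x₀ + c * t₀) (x₁ + c * t₁)))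
    (E H : ℝ → ℝ → ℝ)
    (hE : E = fun x t => (u₀ (x - c * t) + w₀ (x + c * t)) / (2 * Real.sqrt ε))
    (hH : H = fun x t => (u₀ (x - c * t) - w₀ (x + c * t)) / (2 * Real.sqrt μ))
    (Vp : Submodule ℝ ((ℝ → ℝ → ℝ) × (ℝ → ℝ → ℝ)))
    (hVp : Vp = Submodule.span ℝ
      (Set.range (fun k : Fin (p + 1) =>
        ((fun x t => φn k (x - c * t) / (2 * Real.sqrt ε)),
         (fun x t => φn k (x - c * t) / (2 * Real.sqrt μ)))) ∪
       Set.range (fun k : Fin (p + 1) =>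
        ((fun x t => φp k (x + c * t) / (2 * Real.sqrt ε)),
         (fun x t => - φp k (x + c * t) / (2 * Real.sqrt μ)))))) :
    sInf {r : ℝ | ∃ v ∈ Vp,
        r = WinfC c j (fun x t => Real.sqrt ε * (E x t - v.1 x t)) x₀ x₁ t₀ t₁
          + WinfC c j (fun x t => Real.sqrt μ * (H x t - v.2 x t)) x₀ x₁ t₀ t₁}
      ≤ sInf {r : ℝ | ∃ P ∈ Submodule.span ℝ (Set.range φn),
            r = Winf1 j (fun z => u₀ z - P z) (x₀ - c * t₁) (x₁ - c * t₀)}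
        + sInf {r : ℝ | ∃ P ∈ Submodule.span ℝ (Set.range φp),
            r = Winf1 j (fun z => w₀ z - P z) (x₀ + c * t₀) (x₁ + c * t₁)} :=
  stmt15_general x₀ x₁ t₀ t₁ ε μ c hε hμ hc j p u₀ w₀ hu₀ hw₀ φn φp hφn hφp E H hE hH Vp hVp
end

section
/- Let D=(x₀,x₁)×(t₀,t₁)⊂ℝ² be a space–time rectangle, ε, μ > 0 constants, c := (εμ)^{−1/2}, j∈ℕ, and p∈ℕ. Let u₀ ∈ C^j on the closure of Ω_D⁻=(x₀−ct₁, x₁−ct₀) and w₀ ∈ C^j on the closure of Ω_D⁺=(x₀+ct₀, x₁+ct₁), and define E(x,t) := (u₀(x−ct)+w₀(x+ct))/(2ε^{1/2}) and H(x,t) := (u₀(x−ct)−w₀(x+ct))/(2μ^{1/2}) on D. Let Φ⁻={φ₀⁻,…,φ_p⁻} and Φ⁺={φ₀⁺,…,φ_p⁺} be sets of p+1 functions of class C^j on the closures of Ω_D⁻ and Ω_D⁺ respectively, and let V_p(D) be the linear span of the pairs (φ_k⁻(x−ct)/(2ε^{1/2}), φ_k⁻(x−ct)/(2μ^{1/2}))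 and (φ_k⁺(x+ct)/(2ε^{1/2}), −φ_k⁺(x+ct)/(2μ^{1/2})), k=0,…,p. Then inf_{(v_E,v_H)∈V_p(D)} ( |ε^{1/2}(E−v_E)|²_{H^j_c(D)} + |μ^{1/2}(H−v_H)|²_{H^j_c(D)} ) ≤ (j+1) · min{ t₁−t₀ , (x₁−x₀)/c } · ( inf_{P ∈ span Φ⁻} |u₀−P|²_{H^j(Ω_D⁻)} + inf_{P ∈ span Φ⁺} |w₀−P|²_{H^j(Ω_D⁺)} ). -/
/-!
For `P⁻ ∈ span Φ⁻` and `P⁺ ∈ span Φ⁺`, the error of the discrete field built from `P⁻` and `P⁺`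
is, after scaling by `ε^{1/2}` resp. `μ^{1/2}`, a superposition `α g(x - ct) + β h(x + ct)` with
`g = u₀ - P⁻`, `h = w₀ - P⁺` and `α, β = ±1/2`. Every `D_c^α` with `|α| = j` maps it to
`±α g⁽ʲ⁾(x - ct) + β h⁽ʲ⁾(x + ct)`, and the integral of `G(x ± ct)` over `D` is at most
`min(t₁ - t₀, (x₁ - x₀)/c) ∫_{Ω_D^±} G`. Summing over the `j + 1` multi-indices and taking the
infimum over `P⁻, P⁺` gives the bound.
-/

open MeasureTheory Set

theorem csInf_le_mul_add_csInf {S S₁ S₂ : Set ℝ} {C : ℝ} (hC : 0 < C) (hS : BddBelow S)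
    (h₁ : S₁.Nonempty) (h₂ : S₂.Nonempty) (h : ∀ a ∈ S₁, ∀ b ∈ S₂, ∃ r ∈ S, r ≤ C * (a + b)) :
    sInf S ≤ C * (sInf S₁ + sInf S₂) := by
  have key : ∀ a ∈ S₁, ∀ b ∈ S₂, sInf S / C - b ≤ a := fun a ha b hb => by
    obtain ⟨r, hr, hrle⟩ := h a ha b hb
    rw [sub_le_iff_le_add, div_le_iff₀ hC]
    linarith [csInf_le hS hr]
  have := le_csInf h₂ fun b hb => sub_le_comm.mp (le_csInf h₁ fun a ha => key a ha b hb)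
  rw [sub_le_iff_le_add, div_le_iff₀ hC] at this
  linarith

theorem contDiffOn_of_mem_span_range {ι : Type*} {n : WithTop ℕ∞} {s : Set ℝ} {φ : ι → ℝ → ℝ}
    (hφ : ∀ k, ContDiffOn ℝ n (φ k) s) {P : ℝ → ℝ} (hP : P ∈ Submodule.span ℝ (range φ)) :
    ContDiffOn ℝ n P s := by
  induction hP using Submodule.span_induction with
  | mem y hy => obtain ⟨k, rfl⟩ := hy; exact hφ k
  | zero => exact contDiffOn_const
  | add _ _ _ _ ih₁ ih₂ => exact ih₁.add ih₂
  | smul a _ _ ih => exact ih.const_smul a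

theorem LinearMap.mem_of_mem_span_range {ι M N : Type*} [AddCommGroup M] [Module ℝ M]
    [AddCommGroup N] [Module ℝ N] (L : M →ₗ[ℝ] N) {V : Submodule ℝ N} {φ : ι → M}
    (hφ : ∀ k, L (φ k) ∈ V) {P : M} (hP : P ∈ Submodule.span ℝ (Set.range φ)) : L P ∈ V :=
  (Submodule.span_le (p := V.comap L)).mpr (Set.range_subset_iff.mpr hφ) hP

theorem hasDerivAt_iteratedDeriv_of_contDiffOn {n k : ℕ} {f : ℝ → ℝ} {s : Set ℝ} {z : ℝ}
    (hf : ContDiffOn ℝ n f s) (hs : s ∈ nhds z) (hk : k < n) :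
    HasDerivAt (iteratedDeriv k f) (iteratedDeriv (k + 1) f z) z := by
  obtain ⟨U, hUs, hU, hzU⟩ := mem_nhds_iff.mp hs
  have hd : DifferentiableOn ℝ (iteratedDeriv k f) U :=
    ((hf.mono hUs).differentiableOn_iteratedDerivWithin (by exact_mod_cast hk)
      hU.uniqueDiffOn).congr fun y hy => (iteratedDerivWithin_of_isOpen hU hy).symm
  rw [iteratedDeriv_succ]
  exact ((hd z hzU).differentiableAt (hU.mem_nhds hzU)).hasDerivAt

theorem ContDiffOn.exists_continuous_eqOn_iteratedDeriv {n : ℕ} {f : ℝ → ℝ} {a b : ℝ}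
    (hf : ContDiffOn ℝ n f (Icc a b)) (hab : a < b) :
    ∃ F : ℝ → ℝ, Continuous F ∧ EqOn F (iteratedDeriv n f) (Ioo a b) := by
  have hF := hf.continuousOn_iteratedDerivWithin le_rfl (uniqueDiffOn_Icc hab)
  refine ⟨IccExtend hab.le ((Icc a b).domRestrict (iteratedDerivWithin n f (Icc a b))),
    continuous_IccExtend_iff.mpr hF.domRestrict, fun z hz => ?_⟩
  rw [IccExtend_of_mem _ _ (Ioo_subset_Icc_self hz), domRestrict_apply]
  exact iteratedDerivWithin_eq_iteratedDeriv (uniqueDiffOn_Icc hab)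
    (hf.contDiffAt (Icc_mem_nhds hz.1 hz.2)) (Ioo_subset_Icc_self hz)

section Integrals

variable {x₀ x₁ t₀ t₁ : ℝ}

theorem Continuous.integrable_prod_restrict_Ioo {F : ℝ × ℝ → ℝ} (hF : Continuous F) :
    Integrable F ((volume.restrict (Ioo x₀ x₁)).prod (volume.restrict (Ioo t₀ t₁))) := by
  rw [Measure.prod_restrict, ← Measure.volume_eq_prod]
  exact (hF.continuousOn.integrableOn_compact (isCompact_Icc.prod isCompact_Icc)).mono_set
    (prod_mono Ioo_subset_Icc_self Ioo_subset_Icc_self)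

theorem intervalIntegral_intervalIntegral_eq_integral_prod (hx : x₀ ≤ x₁) (ht : t₀ ≤ t₁)
    {F : ℝ → ℝ → ℝ} {G : ℝ × ℝ → ℝ} (hG : Continuous G)
    (hFG : ∀ x ∈ Ioo x₀ x₁, ∀ t ∈ Ioo t₀ t₁, F x t = G (x, t)) :
    ∫ x in x₀..x₁, ∫ t in t₀..t₁, F x t
      = ∫ p, G p ∂(volume.restrict (Ioo x₀ x₁)).prod (volume.restrict (Ioo t₀ t₁)) := by
  rw [integral_prod _ hG.integrable_prod_restrict_Ioo, intervalIntegral.integral_of_le hx,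
    integral_Ioc_eq_integral_Ioo]
  refine setIntegral_congr_fun measurableSet_Ioo fun x hx' => ?_
  rw [intervalIntegral.integral_of_le ht, integral_Ioc_eq_integral_Ioo]
  exact setIntegral_congr_fun measurableSet_Ioo fun t ht' => hFG x hx' t ht'

theorem setIntegral_Ioo_le_mul_of_le {f : ℝ → ℝ} {a b C : ℝ} (hab : a ≤ b)
    (hf0 : ∀ x ∈ Ioo a b, 0 ≤ f x) (hf : ∀ x ∈ Ioo a b, f x ≤ C) :
    ∫ x in Ioo a b, f x ≤ (b - a) * C :=
  calc ∫ x in Ioo a b, f x ≤ ‖∫ x in Ioo a b, f x‖ := Real.le_norm_self _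
    _ ≤ C * volume.real (Ioo a b) := norm_setIntegral_le_of_norm_le_const measure_Ioo_lt_top
        fun x hx => (Real.norm_of_nonneg (hf0 x hx)).trans_le (hf x hx)
    _ = (b - a) * C := by rw [Real.volume_real_Ioo_of_le hab, mul_comm]

variable {G : ℝ → ℝ} {A B : ℝ}

theorem abs_intervalIntegral_le_setIntegral_Ioo (hG : Continuous G) (hG0 : ∀ z, 0 ≤ G z)
    {u v : ℝ} (hu : u ∈ Icc A B) (hv : v ∈ Icc A B) :
    |∫ z in u..v, G z| ≤ ∫ z in Ioo A B, G z := by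
  rw [intervalIntegral.abs_integral_eq_abs_integral_uIoc,
    abs_of_nonneg (setIntegral_nonneg measurableSet_uIoc fun z _ => hG0 z),
    ← integral_Icc_eq_integral_Ioo]
  exact setIntegral_mono_set hG.integrableOn_Icc (ae_of_all _ fun z => hG0 z)
    (uIoc_subset_uIcc.trans (uIcc_subset_Icc hu hv)).eventuallyLE

theorem setIntegral_Ioo_comp_mul_add_le (hG : Continuous G) (hG0 : ∀ z, 0 ≤ G z)
    {s d a b : ℝ} (hs : s ≠ 0) (hab : a ≤ b) (ha : s * a + d ∈ Icc A B)
    (hb : s * b + d ∈ Icc A B) :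
    ∫ τ in Ioo a b, G (s * τ + d) ≤ |s|⁻¹ * ∫ z in Ioo A B, G z :=
  calc ∫ τ in Ioo a b, G (s * τ + d) ≤ |∫ τ in a..b, G (s * τ + d)| := by
        rw [intervalIntegral.integral_of_le hab, integral_Ioc_eq_integral_Ioo]
        exact le_abs_self _
    _ = |s|⁻¹ * |∫ z in s * a + d..s * b + d, G z| := by
        rw [intervalIntegral.integral_comp_mul_add G hs, smul_eq_mul, abs_mul, abs_inv]
    _ ≤ |s|⁻¹ * ∫ z in Ioo A B, G z := by
        gcongr
        exact abs_intervalIntegral_le_setIntegral_Ioo hG hG0 ha hb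

/-- Integrate first along the lines `t = const`, on which `x + s t` sweeps an interval of length
`x₁ - x₀`, or first along the lines `x = const`, on which it sweeps one of length
`|s| (t₁ - t₀)`. -/
theorem integral_comp_add_mul_le (hG : Continuous G) (hG0 : ∀ z, 0 ≤ G z) {s : ℝ} (hs : s ≠ 0)
    (hx : x₀ ≤ x₁) (ht : t₀ ≤ t₁)
    (hmaps : ∀ x ∈ Icc x₀ x₁, ∀ t ∈ Icc t₀ t₁, x + s * t ∈ Icc A B) :
    ∫ p, G (p.1 + s * p.2) ∂(volume.restrict (Ioo x₀ x₁)).prod (volume.restrict (Ioo t₀ t₁))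
      ≤ min (t₁ - t₀) ((x₁ - x₀) / |s|) * ∫ z in Ioo A B, G z := by
  have hint : Integrable (fun p : ℝ × ℝ => G (p.1 + s * p.2))
      ((volume.restrict (Ioo x₀ x₁)).prod (volume.restrict (Ioo t₀ t₁))) :=
    (hG.comp (by fun_prop)).integrable_prod_restrict_Ioo
  have hJ : 0 ≤ ∫ z in Ioo A B, G z := setIntegral_nonneg measurableSet_Ioo fun z _ => hG0 z
  rw [min_mul_of_nonneg _ _ hJ]
  refine le_min ?_ ?_
  · rw [integral_prod_symm _ hint]
    refine setIntegral_Ioo_le_mul_of_le ht (fun t _ => integral_nonneg fun x => hG0 _)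
      fun t ht' => ?_
    have ht' := Ioo_subset_Icc_self ht'
    simpa [add_comm] using setIntegral_Ioo_comp_mul_add_le hG hG0 one_ne_zero hx (d := s * t)
      (by simpa [add_comm] using hmaps x₀ (left_mem_Icc.mpr hx) t ht')
      (by simpa [add_comm] using hmaps x₁ (right_mem_Icc.mpr hx) t ht')
  · rw [integral_prod _ hint, div_mul_eq_mul_div, mul_div_assoc, div_eq_inv_mul]
    refine setIntegral_Ioo_le_mul_of_le hx (fun x _ => integral_nonneg fun t => hG0 _)
      fun x hx' => ?_
    have hx' := Ioo_subset_Icc_self hx'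
    simpa [add_comm] using setIntegral_Ioo_comp_mul_add_le hG hG0 hs ht (d := x)
      (by simpa [add_comm] using hmaps x hx' t₀ (left_mem_Icc.mpr ht))
      (by simpa [add_comm] using hmaps x hx' t₁ (right_mem_Icc.mpr ht))

end Integrals

def dAlembert (c α β : ℝ) (g h : ℝ → ℝ) : ℝ → ℝ → ℝ :=
  fun x t => α * g (x - c * t) + β * h (x + c * t)

section dAlembert

variable {x₀ x₁ t₀ t₁ c x t : ℝ} {j : ℕ} {g h : ℝ → ℝ}

theorem sub_mul_mem_Ioo (hc : 0 ≤ c) (hx : x ∈ Ioo x₀ x₁) (ht : t ∈ Ioo t₀ t₁) :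
    x - c * t ∈ Ioo (x₀ - c * t₁) (x₁ - c * t₀) :=
  ⟨by nlinarith [hx.1, ht.2], by nlinarith [hx.2, ht.1]⟩

theorem add_mul_mem_Ioo (hc : 0 ≤ c) (hx : x ∈ Ioo x₀ x₁) (ht : t ∈ Ioo t₀ t₁) :
    x + c * t ∈ Ioo (x₀ + c * t₀) (x₁ + c * t₁) :=
  ⟨by nlinarith [hx.1, ht.1], by nlinarith [hx.2, ht.2]⟩

theorem hasDerivAt_dAlembert_iteratedDeriv (hc : 0 ≤ c)
    (hg : ContDiffOn ℝ j g (Icc (x₀ - c * t₁) (x₁ - c * t₀)))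
    (hh : ContDiffOn ℝ j h (Icc (x₀ + c * t₀) (x₁ + c * t₁))) {m : ℕ} (hm : m < j) (α β : ℝ)
    {u v : ℝ → ℝ} {u' v' τ : ℝ} (hu : HasDerivAt u u' τ) (hv : HasDerivAt v v' τ)
    (hx : x ∈ Ioo x₀ x₁) (ht : t ∈ Ioo t₀ t₁) (hut : u τ = x - c * t) (hvt : v τ = x + c * t) :
    HasDerivAt (fun τ => α * iteratedDeriv m g (u τ) + β * iteratedDeriv m h (v τ))
      (α * u' * iteratedDeriv (m + 1) g (x - c * t)
        + β * v' * iteratedDeriv (m + 1) h (x + c * t)) τ := by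
  have hg' := hasDerivAt_iteratedDeriv_of_contDiffOn hg
    (Icc_mem_nhds_iff.mpr (sub_mul_mem_Ioo hc hx ht)) hm
  have hh' := hasDerivAt_iteratedDeriv_of_contDiffOn hh
    (Icc_mem_nhds_iff.mpr (add_mul_mem_Ioo hc hx ht)) hm
  rw [← hut] at hg'
  rw [← hvt] at hh'
  exact (((hg'.comp τ hu).const_mul α).add ((hh'.comp τ hv).const_mul β)).congr_deriv
    (by rw [hut, hvt]; ring)

theorem pdT_eq_dAlembert (hc : 0 ≤ c) (hg : ContDiffOn ℝ j g (Icc (x₀ - c * t₁) (x₁ - c * t₀)))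
    (hh : ContDiffOn ℝ j h (Icc (x₀ + c * t₀) (x₁ + c * t₁))) {m : ℕ} (hm : m < j) {α β : ℝ}
    {F : ℝ → ℝ → ℝ} (hF : ∀ x ∈ Ioo x₀ x₁, ∀ t ∈ Ioo t₀ t₁,
      F x t = dAlembert c α β (iteratedDeriv m g) (iteratedDeriv m h) x t)
    (hx : x ∈ Ioo x₀ x₁) (ht : t ∈ Ioo t₀ t₁) :
    pdT F x t
      = dAlembert c (α * -c) (β * c) (iteratedDeriv (m + 1) g) (iteratedDeriv (m + 1) h) x t := by
  have hev : (fun s => F x s) =ᶠ[nhds t] fun s =>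
      α * iteratedDeriv m g (x - c * s) + β * iteratedDeriv m h (x + c * s) :=
    Filter.eventually_of_mem (isOpen_Ioo.mem_nhds ht) fun s hs => hF x hx s hs
  have hu : HasDerivAt (fun s => x - c * s) (-c) t := by
    simpa using ((hasDerivAt_id t).const_mul c).const_sub x
  have hv : HasDerivAt (fun s => x + c * s) c t := by
    simpa using ((hasDerivAt_id t).const_mul c).const_add x
  exact hev.deriv_eq.trans
    (hasDerivAt_dAlembert_iteratedDeriv hc hg hh hm α β hu hv hx ht rfl rfl).deriv

theorem pdX_eq_dAlembert (hc : 0 ≤ c) (hg : ContDiffOn ℝ j g (Icc (x₀ - c * t₁) (x₁ - c * t₀)))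
    (hh : ContDiffOn ℝ j h (Icc (x₀ + c * t₀) (x₁ + c * t₁))) {m : ℕ} (hm : m < j) {α β : ℝ}
    {F : ℝ → ℝ → ℝ} (hF : ∀ x ∈ Ioo x₀ x₁, ∀ t ∈ Ioo t₀ t₁,
      F x t = dAlembert c α β (iteratedDeriv m g) (iteratedDeriv m h) x t)
    (hx : x ∈ Ioo x₀ x₁) (ht : t ∈ Ioo t₀ t₁) :
    pdX F x t = dAlembert c α β (iteratedDeriv (m + 1) g) (iteratedDeriv (m + 1) h) x t := by
  have hev : (fun y => F y t) =ᶠ[nhds x] fun y =>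
      α * iteratedDeriv m g (y - c * t) + β * iteratedDeriv m h (y + c * t) :=
    Filter.eventually_of_mem (isOpen_Ioo.mem_nhds hx) fun y hy => hF y hy t ht
  have hu : HasDerivAt (fun y => y - c * t) 1 x := (hasDerivAt_id x).sub_const _
  have hv : HasDerivAt (fun y => y + c * t) 1 x := (hasDerivAt_id x).add_const _
  rw [pdX, hev.deriv_eq,
    (hasDerivAt_dAlembert_iteratedDeriv hc hg hh hm α β hu hv hx ht rfl rfl).deriv]
  simp only [dAlembert, mul_one]

theorem iterate_pdT_dAlembert (hc : 0 ≤ c)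
    (hg : ContDiffOn ℝ j g (Icc (x₀ - c * t₁) (x₁ - c * t₀)))
    (hh : ContDiffOn ℝ j h (Icc (x₀ + c * t₀) (x₁ + c * t₁))) (α β : ℝ) {b : ℕ} (hb : b ≤ j)
    (hx : x ∈ Ioo x₀ x₁) (ht : t ∈ Ioo t₀ t₁) :
    pdT^[b] (dAlembert c α β g h) x t
      = dAlembert c (α * (-c) ^ b) (β * c ^ b) (iteratedDeriv b g) (iteratedDeriv b h) x t := by
  induction b generalizing x t with
  | zero => simp [dAlembert]
  | succ b ih =>
    rw [Function.iterate_succ_apply', pdT_eq_dAlembert hc hg hh hb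
      (fun y hy s hs => ih (by omega) hy hs) hx ht, pow_succ, pow_succ, ← mul_assoc, ← mul_assoc]

theorem iterate_pdX_iterate_pdT_dAlembert (hc : 0 ≤ c)
    (hg : ContDiffOn ℝ j g (Icc (x₀ - c * t₁) (x₁ - c * t₀)))
    (hh : ContDiffOn ℝ j h (Icc (x₀ + c * t₀) (x₁ + c * t₁))) (α β : ℝ) {a b : ℕ}
    (hab : a + b ≤ j) (hx : x ∈ Ioo x₀ x₁) (ht : t ∈ Ioo t₀ t₁) :
    pdX^[a] (pdT^[b] (dAlembert c α β g h)) x t = dAlembert c (α * (-c) ^ b) (β * c ^ b)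
      (iteratedDeriv (a + b) g) (iteratedDeriv (a + b) h) x t := by
  induction a generalizing x t with
  | zero => simpa using iterate_pdT_dAlembert hc hg hh α β (by omega) hx ht
  | succ a ih =>
    rw [Function.iterate_succ_apply', pdX_eq_dAlembert hc hg hh (by omega : a + b < j)
      (fun y hy s hs => ih (by omega) hy hs) hx ht, Nat.add_right_comm]

theorem Dc_dAlembert (hc : 0 < c)
    (hg : ContDiffOn ℝ j g (Icc (x₀ - c * t₁) (x₁ - c * t₀)))
    (hh : ContDiffOn ℝ j h (Icc (x₀ + c * t₀) (x₁ + c * t₁))) (α β : ℝ) {k : ℕ} (hk : k ≤ j)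
    (hx : x ∈ Ioo x₀ x₁) (ht : t ∈ Ioo t₀ t₁) :
    Dc c (j - k) k (dAlembert c α β g h) x t
      = dAlembert c (α * (-1) ^ k) β (iteratedDeriv j g) (iteratedDeriv j h) x t := by
  have hck : c ^ k ≠ 0 := pow_ne_zero _ hc.ne'
  rw [Dc, iterate_pdX_iterate_pdT_dAlembert hc.le hg hh α β (by omega) hx ht,
    Nat.sub_add_cancel hk, dAlembert, dAlembert, neg_pow]
  field_simp

end dAlembert

theorem HjCsq_nonneg {c : ℝ} {j : ℕ} (v : ℝ → ℝ → ℝ) {x₀ x₁ t₀ t₁ : ℝ} (hx : x₀ ≤ x₁)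
    (ht : t₀ ≤ t₁) : 0 ≤ HjCsq c j v x₀ x₁ t₀ t₁ :=
  Finset.sum_nonneg fun _ _ => intervalIntegral.integral_nonneg hx fun _ _ =>
    intervalIntegral.integral_nonneg ht fun _ _ => sq_nonneg _

theorem integral_sq_dAlembert_le {x₀ x₁ t₀ t₁ c : ℝ} (hx : x₀ ≤ x₁) (ht : t₀ ≤ t₁) (hc : 0 < c)
    {G H : ℝ → ℝ} (hG : Continuous G) (hH : Continuous H) (α β : ℝ) :
    ∫ p, dAlembert c α β G H p.1 p.2 ^ 2
        ∂(volume.restrict (Ioo x₀ x₁)).prod (volume.restrict (Ioo t₀ t₁))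
      ≤ 2 * min (t₁ - t₀) ((x₁ - x₀) / c) *
        (α ^ 2 * (∫ z in Ioo (x₀ - c * t₁) (x₁ - c * t₀), G z ^ 2)
          + β ^ 2 * ∫ z in Ioo (x₀ + c * t₀) (x₁ + c * t₁), H z ^ 2) := by
  set ρ := (volume.restrict (Ioo x₀ x₁)).prod (volume.restrict (Ioo t₀ t₁))
  have hGρ : ∫ p, G (p.1 - c * p.2) ^ 2 ∂ρ
      ≤ min (t₁ - t₀) ((x₁ - x₀) / c) * ∫ z in Ioo (x₀ - c * t₁) (x₁ - c * t₀), G z ^ 2 := by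
    have := integral_comp_add_mul_le (G := fun z => G z ^ 2) (hG.pow 2) (fun z => sq_nonneg _)
      (neg_ne_zero.mpr hc.ne') hx ht (A := x₀ - c * t₁) (B := x₁ - c * t₀)
      fun x hx' t ht' => ⟨by nlinarith [hx'.1, ht'.2], by nlinarith [hx'.2, ht'.1]⟩
    simpa only [abs_neg, abs_of_pos hc, neg_mul, ← sub_eq_add_neg] using this
  have hHρ : ∫ p, H (p.1 + c * p.2) ^ 2 ∂ρ
      ≤ min (t₁ - t₀) ((x₁ - x₀) / c) * ∫ z in Ioo (x₀ + c * t₀) (x₁ + c * t₁), H z ^ 2 := by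
    have := integral_comp_add_mul_le (G := fun z => H z ^ 2) (hH.pow 2) (fun z => sq_nonneg _)
      hc.ne' hx ht (A := x₀ + c * t₀) (B := x₁ + c * t₁)
      fun x hx' t ht' => ⟨by nlinarith [hx'.1, ht'.1], by nlinarith [hx'.2, ht'.2]⟩
    simpa only [abs_of_pos hc] using this
  calc ∫ p, dAlembert c α β G H p.1 p.2 ^ 2 ∂ρ
      ≤ ∫ p, 2 * α ^ 2 * G (p.1 - c * p.2) ^ 2 + 2 * β ^ 2 * H (p.1 + c * p.2) ^ 2 ∂ρ :=
        integral_mono (Continuous.integrable_prod_restrict_Ioo (by fun_prop [dAlembert]))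
          (Continuous.integrable_prod_restrict_Ioo (by fun_prop)) fun p =>
            add_sq_le.trans_eq (by ring)
    _ = 2 * α ^ 2 * (∫ p, G (p.1 - c * p.2) ^ 2 ∂ρ)
          + 2 * β ^ 2 * ∫ p, H (p.1 + c * p.2) ^ 2 ∂ρ := by
        rw [integral_add (Continuous.integrable_prod_restrict_Ioo (by fun_prop))
          (Continuous.integrable_prod_restrict_Ioo (by fun_prop)), integral_const_mul,
          integral_const_mul]
    _ ≤ _ := by nlinarith [mul_le_mul_of_nonneg_left hGρ (sq_nonneg α),
          mul_le_mul_of_nonneg_left hHρ (sq_nonneg β)]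

theorem integral_sq_Dc_dAlembert_le {x₀ x₁ t₀ t₁ c : ℝ} (hx : x₀ < x₁) (ht : t₀ < t₁)
    (hc : 0 < c) {j : ℕ} {g h : ℝ → ℝ} (hg : ContDiffOn ℝ j g (Icc (x₀ - c * t₁) (x₁ - c * t₀)))
    (hh : ContDiffOn ℝ j h (Icc (x₀ + c * t₀) (x₁ + c * t₁))) (α β : ℝ) {k : ℕ} (hk : k ≤ j) :
    ∫ x in x₀..x₁, ∫ t in t₀..t₁, Dc c (j - k) k (dAlembert c α β g h) x t ^ 2
      ≤ 2 * min (t₁ - t₀) ((x₁ - x₀) / c) *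
        (α ^ 2 * (∫ z in Ioo (x₀ - c * t₁) (x₁ - c * t₀), iteratedDeriv j g z ^ 2)
          + β ^ 2 * ∫ z in Ioo (x₀ + c * t₀) (x₁ + c * t₁), iteratedDeriv j h z ^ 2) := by
  obtain ⟨G, hGc, hG⟩ := hg.exists_continuous_eqOn_iteratedDeriv (by nlinarith)
  obtain ⟨H, hHc, hH⟩ := hh.exists_continuous_eqOn_iteratedDeriv (by nlinarith)
  have hJg : ∫ z in Ioo (x₀ - c * t₁) (x₁ - c * t₀), iteratedDeriv j g z ^ 2
      = ∫ z in Ioo (x₀ - c * t₁) (x₁ - c * t₀), G z ^ 2 :=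
    setIntegral_congr_fun measurableSet_Ioo fun z hz => by rw [hG hz]
  have hJh : ∫ z in Ioo (x₀ + c * t₀) (x₁ + c * t₁), iteratedDeriv j h z ^ 2
      = ∫ z in Ioo (x₀ + c * t₀) (x₁ + c * t₁), H z ^ 2 :=
    setIntegral_congr_fun measurableSet_Ioo fun z hz => by rw [hH hz]
  have hsign : ((-1 : ℝ) ^ k) ^ 2 = 1 := by rw [← pow_mul, mul_comm, pow_mul]; norm_num
  rw [hJg, hJh, intervalIntegral_intervalIntegral_eq_integral_prod hx.le ht.le
      (G := fun p => dAlembert c (α * (-1) ^ k) β G H p.1 p.2 ^ 2) (by fun_prop [dAlembert])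
      fun x hx' t ht' => by
        rw [Dc_dAlembert hc hg hh α β hk hx' ht', dAlembert, dAlembert,
          hG (sub_mul_mem_Ioo hc.le hx' ht'), hH (add_mul_mem_Ioo hc.le hx' ht')]]
  simpa only [mul_pow, hsign, mul_one] using
    integral_sq_dAlembert_le hx.le ht.le hc hGc hHc (α * (-1) ^ k) β

theorem HjCsq_dAlembert_le {x₀ x₁ t₀ t₁ c : ℝ} (hx : x₀ < x₁) (ht : t₀ < t₁) (hc : 0 < c)
    {j : ℕ} {g h : ℝ → ℝ} (hg : ContDiffOn ℝ j g (Icc (x₀ - c * t₁) (x₁ - c * t₀)))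
    (hh : ContDiffOn ℝ j h (Icc (x₀ + c * t₀) (x₁ + c * t₁))) (α β : ℝ) :
    HjCsq c j (dAlembert c α β g h) x₀ x₁ t₀ t₁
      ≤ 2 * (j + 1) * min (t₁ - t₀) ((x₁ - x₀) / c) *
        (α ^ 2 * (∫ z in Ioo (x₀ - c * t₁) (x₁ - c * t₀), iteratedDeriv j g z ^ 2)
          + β ^ 2 * ∫ z in Ioo (x₀ + c * t₀) (x₁ + c * t₁), iteratedDeriv j h z ^ 2) := by
  refine (Finset.sum_le_sum fun k hk => integral_sq_Dc_dAlembert_le hx ht hc hg hh α β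
    (Nat.lt_succ_iff.mp (Finset.mem_range.mp hk))).trans_eq ?_
  rw [Finset.sum_const, Finset.card_range, nsmul_eq_mul]
  push_cast
  ring

noncomputable def rightMovingField (c ε μ : ℝ) : (ℝ → ℝ) →ₗ[ℝ] (ℝ → ℝ → ℝ) × (ℝ → ℝ → ℝ) where
  toFun P := (fun x t => P (x - c * t) / (2 * Real.sqrt ε),
    fun x t => P (x - c * t) / (2 * Real.sqrt μ))
  map_add' P Q := by ext <;> simp [add_div]
  map_smul' a P := by ext <;> simp [mul_div_assoc]

noncomputable def leftMovingField (c ε μ : ℝ) : (ℝ → ℝ) →ₗ[ℝ] (ℝ → ℝ → ℝ) × (ℝ → ℝ → ℝ) where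
  toFun P := (fun x t => P (x + c * t) / (2 * Real.sqrt ε),
    fun x t => - P (x + c * t) / (2 * Real.sqrt μ))
  map_add' P Q := by ext <;> simp <;> ring
  map_smul' a P := by ext <;> simp <;> ring

theorem electricError_eq_dAlembert {c ε μ : ℝ} (hε : 0 < ε) (u₀ w₀ P₁ P₂ : ℝ → ℝ) :
    (fun x t => Real.sqrt ε * ((u₀ (x - c * t) + w₀ (x + c * t)) / (2 * Real.sqrt ε)
        - (rightMovingField c ε μ P₁ + leftMovingField c ε μ P₂).1 x t))
      = dAlembert c (1 / 2) (1 / 2) (fun y => u₀ y - P₁ y) (fun y => w₀ y - P₂ y) := by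
  ext x t
  simp only [rightMovingField, leftMovingField, LinearMap.coe_mk, AddHom.coe_mk,
    Prod.mk_add_mk, Pi.add_apply, dAlembert]
  field_simp
  ring

theorem magneticError_eq_dAlembert {c ε μ : ℝ} (hμ : 0 < μ) (u₀ w₀ P₁ P₂ : ℝ → ℝ) :
    (fun x t => Real.sqrt μ * ((u₀ (x - c * t) - w₀ (x + c * t)) / (2 * Real.sqrt μ)
        - (rightMovingField c ε μ P₁ + leftMovingField c ε μ P₂).2 x t))
      = dAlembert c (1 / 2) (-(1 / 2)) (fun y => u₀ y - P₁ y) (fun y => w₀ y - P₂ y) := by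
  ext x t
  simp only [rightMovingField, leftMovingField, LinearMap.coe_mk, AddHom.coe_mk,
    Prod.mk_add_mk, Pi.add_apply, dAlembert]
  field_simp
  ring

theorem stmt16 (x₀ x₁ t₀ t₁ ε μ c : ℝ) (hx : x₀ < x₁) (ht : t₀ < t₁)
    (hε : 0 < ε) (hμ : 0 < μ) (hc : c = (Real.sqrt (ε * μ))⁻¹)
    (j p : ℕ) (u₀ w₀ : ℝ → ℝ)
    (hu₀ : ContDiffOn ℝ j u₀ (Set.Icc (x₀ - c * t₁) (x₁ - c * t₀)))
    (hw₀ : ContDiffOn ℝ j w₀ (Set.Icc (x₀ + c * t₀) (x₁ + c * t₁)))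
    (φn φp : Fin (p + 1) → ℝ → ℝ)
    (hφn : ∀ k, ContDiffOn ℝ j (φn k) (Set.Icc (x₀ - c * t₁) (x₁ - c * t₀)))
    (hφp : ∀ k, ContDiffOn ℝ j (φp k) (Set.Icc (x₀ + c * t₀) (x₁ + c * t₁)))
    (E H : ℝ → ℝ → ℝ)
    (hE : E = fun x t => (u₀ (x - c * t) + w₀ (x + c * t)) / (2 * Real.sqrt ε))
    (hH : H = fun x t => (u₀ (x - c * t) - w₀ (x + c * t)) / (2 * Real.sqrt μ))
    (Vp : Submodule ℝ ((ℝ → ℝ → ℝ) × (ℝ → ℝ → ℝ)))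
    (hVp : Vp = Submodule.span ℝ
      (Set.range (fun k : Fin (p + 1) =>
        ((fun x t => φn k (x - c * t) / (2 * Real.sqrt ε)),
         (fun x t => φn k (x - c * t) / (2 * Real.sqrt μ)))) ∪
       Set.range (fun k : Fin (p + 1) =>
        ((fun x t => φp k (x + c * t) / (2 * Real.sqrt ε)),
         (fun x t => - φp k (x + c * t) / (2 * Real.sqrt μ)))))) :
    sInf {r : ℝ | ∃ v ∈ Vp,
        r = HjCsq c j (fun x t => Real.sqrt ε * (E x t - v.1 x t)) x₀ x₁ t₀ t₁
          + HjCsq c j (fun x t => Real.sqrt μ * (H x t - v.2 x t)) x₀ x₁ t₀ t₁}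
      ≤ (j + 1) * min (t₁ - t₀) ((x₁ - x₀) / c) *
        (sInf {r : ℝ | ∃ P ∈ Submodule.span ℝ (Set.range φn),
            r = ∫ z in Set.Ioo (x₀ - c * t₁) (x₁ - c * t₀),
                  (iteratedDeriv j (fun y => u₀ y - P y) z) ^ 2}
          + sInf {r : ℝ | ∃ P ∈ Submodule.span ℝ (Set.range φp),
            r = ∫ z in Set.Ioo (x₀ + c * t₀) (x₁ + c * t₁),
                  (iteratedDeriv j (fun y => w₀ y - P y) z) ^ 2}) := by
  have hc0 : 0 < c := hc ▸ inv_pos.mpr (Real.sqrt_pos.mpr (mul_pos hε hμ))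
  have hm : 0 < min (t₁ - t₀) ((x₁ - x₀) / c) :=
    lt_min (sub_pos.mpr ht) (div_pos (sub_pos.mpr hx) hc0)
  refine csInf_le_mul_add_csInf (by positivity) ⟨0, ?_⟩ ⟨_, 0, zero_mem _, rfl⟩
    ⟨_, 0, zero_mem _, rfl⟩ ?_
  · rintro _ ⟨v, -, rfl⟩
    exact add_nonneg (HjCsq_nonneg _ hx.le ht.le) (HjCsq_nonneg _ hx.le ht.le)
  rintro _ ⟨P₁, hP₁, rfl⟩ _ ⟨P₂, hP₂, rfl⟩
  refine ⟨_, ⟨rightMovingField c ε μ P₁ + leftMovingField c ε μ P₂, ?_, rfl⟩, ?_⟩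
  · subst hVp
    exact add_mem
      ((rightMovingField c ε μ).mem_of_mem_span_range
        (fun k => Submodule.subset_span (Or.inl ⟨k, rfl⟩)) hP₁)
      ((leftMovingField c ε μ).mem_of_mem_span_range
        (fun k => Submodule.subset_span (Or.inr ⟨k, rfl⟩)) hP₂)
  have hg := hu₀.sub (contDiffOn_of_mem_span_range hφn hP₁)
  have hh := hw₀.sub (contDiffOn_of_mem_span_range hφp hP₂)
  subst hE hH
  beta_reduce
  rw [electricError_eq_dAlembert hε, magneticError_eq_dAlembert hμ]
  linarith [HjCsq_dAlembert_le hx ht hc0 hg hh (1 / 2) (1 / 2),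
    HjCsq_dAlembert_le hx ht hc0 hg hh (1 / 2) (-(1 / 2))]
end
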